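/- arXiv:1609.07219 — 8 statements merged into one kernel-verified Lean document; each statement's English description precedes it below -/
import Mathlib

section
/- Fix N ≥ 1 and a routing policy Q (possibly state-dependent) such that the associated continuous-time Markov chain on S_N admits a unique stationary distribution π. Let A_i^{(N)} = π{(E,F) : E_{ii} > 0}. Let (q*, ē*, f̄*, ā*) be an optimal solution of the fluid-based optimization problem with rewards c_{ij} > 0. Then Σ_{i,j} A_i^{(N)} λ_i P_{ij} c_{ij} < Σ_{i,j} ā*_i λ_i P_{ij} c_{ij}; that is, the optimal value of the fluid-based optimization is a strict upper bound on the steady-state utility of the N-car system under any routing policy. -/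
/-!
Under a stationary distribution the expected drift of every coordinate of the state vanishes.
For the coordinates `F_ij`, `E_ij` (`i ≠ j`) and `E_ii` these identities are the balance
constraints of the fluid problem, satisfied by the mean scaled state `(ē, f̄)`, the idle
probabilities `A_i = π{E_ii > 0}` and the normalised mean routed flow as routing matrix. In place
of complementarity `(1 - A_i) ē_ii = 0` one only has `ē_ii > 0 ↔ A_i > 0`, but also `A_i < 1`:
pickups drain the idle cars at `i`, and the support of `π` is closed under transitions.
So `f̄`, the off-diagonal part of `ē` and `A` can be scaled up by
`θ = 1 / max (1 - ∑ ē_ii) (max A) > 1`, the remaining mass going to the idle cars of a region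
where `A` is maximal; this point is feasible, with objective `θ U(A) > U(A)`.
-/

open Finset Filter Topology MeasureTheory

abbrev Mat (r : ℕ) := Fin r → Fin r → ℝ

/-- The network primitives: per-car arrival rates `lam`, travel rates `mu`,
and the row-stochastic destination matrix `P`. -/
structure NetParams (r : ℕ) where
  lam : Fin r → ℝ
  mu : Mat r
  P : Mat r
  lam_pos : ∀ i, 0 < lam i
  mu_pos : ∀ i j, 0 < mu i j
  P_nonneg : ∀ i j, 0 ≤ P i j
  P_rowsum : ∀ i, ∑ j, P i j = 1

/-- `q` is a routing matrix: nonnegative entries with rows summing to one. -/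
def IsRouting {r : ℕ} (q : Mat r) : Prop :=
  (∀ i j, 0 ≤ q i j) ∧ ∀ i, ∑ j, q i j = 1

/-- `(e, f)` belongs to the set 𝒯. -/
def MemT {r : ℕ} (e f : Mat r) : Prop :=
  (∀ i j, e i j ∈ Set.Icc (0:ℝ) 1) ∧ (∀ i j, f i j ∈ Set.Icc (0:ℝ) 1) ∧
    (∑ i, ∑ j, (e i j + f i j)) = 1

/-- `(q, ebar, fbar, abar)` is feasible for the fluid-based optimization problem. -/
def FluidFeasible {r : ℕ} (np : NetParams r) (q ebar fbar : Mat r)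
    (abar : Fin r → ℝ) : Prop :=
  IsRouting q ∧
  (∀ i j, np.lam i * np.P i j * abar i = np.mu i j * fbar i j) ∧
  (∀ i j, i ≠ j → np.mu i j * ebar i j = q i j * ∑ k, np.mu k i * fbar k i) ∧
  (∀ i, np.lam i * abar i =
    (∑ k ∈ Finset.univ.filter (fun k => k ≠ i), np.mu k i * ebar k i)
      + q i i * ∑ k, np.mu k i * fbar k i) ∧
  (∀ i, (1 - abar i) * ebar i i = 0) ∧
  MemT ebar fbar ∧
  (∀ i, 0 ≤ abar i ∧ abar i ≤ 1)

/-- The objective value `U(ā) = Σ_{i,j} ā_i λ_i P_{ij} c_{ij}`. -/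
noncomputable def objU {r : ℕ} (np : NetParams r) (c : Mat r) (abar : Fin r → ℝ) : ℝ :=
  ∑ i, ∑ j, abar i * np.lam i * np.P i j * c i j

abbrev CMat (r : ℕ) := Fin r → Fin r → ℕ
abbrev NState (r : ℕ) := CMat r × CMat r

def totalCars {r : ℕ} (x : NState r) : ℕ := ∑ i, ∑ j, (x.1 i j + x.2 i j)

noncomputable def scale {r : ℕ} (N : ℕ) (M : CMat r) : Mat r :=
  fun i j => (M i j : ℝ) / N

def incE {r : ℕ} (M : CMat r) (a b : Fin r) : CMat r :=
  fun i j => if i = a ∧ j = b then M i j + 1 else M i j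

def decE {r : ℕ} (M : CMat r) (a b : Fin r) : CMat r :=
  fun i j => if i = a ∧ j = b then M i j - 1 else M i j

/-- Passenger arrives to region `i` and starts a ride from `i` to `j`. -/
def pickupTarget {r : ℕ} (x : NState r) (i j : Fin r) : NState r :=
  (decE x.1 i i, incE x.2 i j)

/-- A full car from `i` drops off its passenger at `j` and the (now empty) car heads to `k`. -/
def dropoffTarget {r : ℕ} (x : NState r) (i j k : Fin r) : NState r :=
  (incE x.1 j k, decE x.2 i j)

/-- An empty car travelling from `i` arrives to region `j ≠ i`. -/
def emptyTarget {r : ℕ} (x : NState r) (i j : Fin r) : NState r :=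
  (incE (decE x.1 i j) j j, x.2)

/-- Transition rate of the CTMC from state `x` to state `y`, with `N` cars,
network parameters `np` and (possibly state-dependent) routing policy `Q`. -/
noncomputable def ctmcRate {r : ℕ} (np : NetParams r) (Q : Mat r → Mat r → Mat r)
    (N : ℕ) (x y : NState r) : ℝ :=
  (∑ i, ∑ j, if 0 < x.1 i i ∧ y = pickupTarget x i j
      then (N : ℝ) * np.lam i * np.P i j else 0)
  + (∑ i, ∑ j, ∑ k, if y = dropoffTarget x i j k
      then np.mu i j * (x.2 i j : ℝ) * Q (scale N x.1) (scale N x.2) j k else 0)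
  + (∑ i, ∑ j, if i ≠ j ∧ y = emptyTarget x i j
      then np.mu i j * (x.1 i j : ℝ) else 0)

/-- `π` is a stationary distribution for the `N`-car CTMC. -/
noncomputable def CtmcIsStationary {r : ℕ} (np : NetParams r) (Q : Mat r → Mat r → Mat r)
    (N : ℕ) (π : NState r → ℝ) : Prop :=
  (∀ x, 0 ≤ π x) ∧
  (∀ x, totalCars x ≠ N → π x = 0) ∧
  (∑' x, π x) = 1 ∧
  ∀ x, (∑' y, π y * ctmcRate np Q N y x) = π x * ∑' y, ctmcRate np Q N x y

/-- Probability of a set of states under `π`. -/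
noncomputable def probOf {r : ℕ} (π : NState r → ℝ) (s : Set (NState r)) : ℝ :=
  ∑' x, Set.indicator s π x

theorem le_sum_sum {ι κ M : Type*} [Fintype ι] [Fintype κ] [AddCommMonoid M] [Preorder M]
    [AddLeftMono M] {f : ι → κ → M}
    (hf : ∀ i j, 0 ≤ f i j) (i : ι) (j : κ) : f i j ≤ ∑ i, ∑ j, f i j :=
  (Finset.single_le_sum (fun j _ => hf i j) (Finset.mem_univ j)).trans
    (Finset.single_le_sum (f := fun i => ∑ j, f i j)
      (fun i _ => Finset.sum_nonneg fun j _ => hf i j) (Finset.mem_univ i))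

theorem hasSum_ite_and_eq_mul {α : Type*} [DecidableEq α] (p : Prop) [Decidable p] (t : α)
    (w : ℝ) (h : α → ℝ) :
    HasSum (fun y => (if p ∧ y = t then w else 0) * h y) (if p then w * h t else 0) := by
  by_cases hp : p
  · convert hasSum_ite_eq t (w * h t) using 1
    · ext y; by_cases hy : y = t <;> simp [hp, hy]
    · simp [hp]
  · simp [hp, hasSum_zero]

section Balance
variable {α : Type*} {rate : α → α → ℝ} {π : α → ℝ} {s : Finset α}

theorem sum_mul_inflow_eq (hπ : ∀ x ∉ s, π x = 0)
    (hbal : ∀ x, ∑' y, π y * rate y x = π x * ∑' y, rate x y) (y : α) :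
    ∑ x ∈ s, π x * rate x y = π y * ∑' z, rate y z := by
  rw [← hbal, tsum_eq_sum fun x hx => by rw [hπ x hx, zero_mul]]

theorem sum_mul_tsum_rate_mul_sub_eq_zero (hπ : ∀ x ∉ s, π x = 0)
    (hsum : ∀ x (h : α → ℝ), Summable fun y => rate x y * h y)
    (hbal : ∀ x, ∑' y, π y * rate y x = π x * ∑' y, rate x y) (g : α → ℝ) :
    ∑ x ∈ s, π x * ∑' y, rate x y * (g y - g x) = 0 := by
  have hsplit : ∀ x, π x * ∑' y, rate x y * (g y - g x)
      = ∑' y, π x * (rate x y * g y) - π x * g x * ∑' y, rate x y := fun x => by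
    have hx : Summable (rate x) := by simpa using hsum x 1
    simp_rw [mul_sub]
    rw [(hsum x g).tsum_sub (hx.mul_right (g x)), tsum_mul_right, tsum_mul_left]
    ring
  calc ∑ x ∈ s, π x * ∑' y, rate x y * (g y - g x)
      = ∑' y, (∑ x ∈ s, π x * rate x y) * g y
          - ∑ x ∈ s, π x * g x * ∑' y, rate x y := by
        simp_rw [hsplit, Finset.sum_sub_distrib, Finset.sum_mul, mul_assoc]
        rw [Summable.tsum_finsetSum fun x _ => (hsum x g).mul_left (π x)]
    _ = 0 := by
        simp_rw [sum_mul_inflow_eq hπ hbal]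
        rw [tsum_eq_sum (s := s) fun y hy => by rw [hπ y hy]; ring, sub_eq_zero]
        exact Finset.sum_congr rfl fun _ _ => by ring

theorem pos_of_rate_pos (hπ0 : ∀ x, 0 ≤ π x) (hπ : ∀ x ∉ s, π x = 0)
    (hrate0 : ∀ x ∈ s, ∀ y, 0 ≤ rate x y)
    (hbal : ∀ x, ∑' y, π y * rate y x = π x * ∑' y, rate x y)
    {x y : α} (hx : 0 < π x) (hxy : 0 < rate x y) : 0 < π y := by
  have hxs : x ∈ s := by_contra fun h => hx.ne' (hπ x h)
  have hin : 0 < π y * ∑' z, rate y z := by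
    rw [← sum_mul_inflow_eq hπ hbal]
    exact (mul_pos hx hxy).trans_le (Finset.single_le_sum (f := fun z => π z * rate z y)
      (fun z hz => mul_nonneg (hπ0 z) (hrate0 z hz y)) hxs)
  exact (hπ0 y).lt_of_ne fun h => by rw [← h, zero_mul] at hin; exact hin.false
end Balance

section Fluid
variable {r : ℕ}

theorem memT_of_nonneg {e f : Mat r} (he : ∀ i j, 0 ≤ e i j) (hf : ∀ i j, 0 ≤ f i j)
    (hsum : ∑ i, ∑ j, (e i j + f i j) = 1) : MemT e f := by
  have hle : ∀ i j, e i j + f i j ≤ 1 := fun i j =>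
    hsum ▸ le_sum_sum (fun i j => add_nonneg (he i j) (hf i j)) i j
  exact ⟨fun i j => ⟨he i j, by linarith [hle i j, hf i j]⟩,
    fun i j => ⟨hf i j, by linarith [hle i j, he i j]⟩, hsum⟩

theorem exists_isRouting_mul_sum {G : Mat r} (hG : ∀ i j, 0 ≤ G i j) :
    ∃ q, IsRouting q ∧ ∀ i j, G i j = q i j * ∑ k, G i k := by
  classical
  refine ⟨fun i j => if ∑ k, G i k = 0 then (if i = j then 1 else 0) else G i j / ∑ k, G i k,
    ⟨fun i j => ?_, fun i => ?_⟩, fun i j => ?_⟩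
  · dsimp only
    split_ifs
    · exact zero_le_one
    · exact le_rfl
    · exact div_nonneg (hG i j) (Finset.sum_nonneg fun k _ => hG i k)
  · by_cases h : ∑ k, G i k = 0
    · simp [h]
    · simp only [h, if_false, ← Finset.sum_div, div_self h]
  · by_cases h : ∑ k, G i k = 0
    · rw [h, mul_zero]
      exact (Finset.sum_eq_zero_iff_of_nonneg fun k _ => hG i k).1 h j (Finset.mem_univ j)
    · simp only [h, if_false, div_mul_cancel₀ _ h]

theorem NetParams.exists_P_pos {r : ℕ} (np : NetParams r) (i : Fin r) : ∃ j, 0 < np.P i j := by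
  by_contra! h
  have := np.P_rowsum i
  rw [Finset.sum_eq_zero fun j _ => le_antisymm (h j) (np.P_nonneg i j)] at this
  exact zero_ne_one this

theorem objU_pos (np : NetParams r) {c : Mat r} (hc : ∀ i j, 0 < c i j) {a : Fin r → ℝ}
    (ha : ∀ i, 0 ≤ a i) {i₁ : Fin r} (hi₁ : 0 < a i₁) : 0 < objU np c a := by
  have hterm : ∀ i j, 0 ≤ a i * np.lam i * np.P i j * c i j := fun i j => by
    have := (np.lam_pos i).le; have := np.P_nonneg i j; have := (hc i j).le; have := ha i
    positivity
  obtain ⟨j, hj⟩ := np.exists_P_pos i₁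
  have hpos : 0 < a i₁ * np.lam i₁ * np.P i₁ j * c i₁ j := by
    have := np.lam_pos i₁; have := hc i₁ j; positivity
  exact hpos.trans_le (le_sum_sum hterm i₁ j)

theorem objU_smul (np : NetParams r) (c : Mat r) (θ : ℝ) (a : Fin r → ℝ) :
    objU np c (θ • a) = θ * objU np c a := by
  simp only [objU, Pi.smul_apply, smul_eq_mul, Finset.mul_sum]
  exact Finset.sum_congr rfl fun i _ => Finset.sum_congr rfl fun j _ => by ring

noncomputable def rescaleEmpty (e : Mat r) (θ : ℝ) (i₀ : Fin r) : Mat r :=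
  fun i j => if i = j then (if i = i₀ then 1 - θ * (1 - ∑ k, e k k) else 0) else θ * e i j

theorem memT_rescaleEmpty {e f : Mat r} (hT : MemT e f) {θ : ℝ} (hθ : 0 ≤ θ)
    (hR : θ * (1 - ∑ k, e k k) ≤ 1) (i₀ : Fin r) :
    MemT (rescaleEmpty e θ i₀) (θ • f) := by
  have hdecomp : ∀ i j, rescaleEmpty e θ i₀ i j = θ * e i j +
      if i = j then (if i = i₀ then 1 - θ * (1 - ∑ k, e k k) else 0) - θ * e i i else 0 :=
    fun i j => by by_cases hij : i = j <;> simp [rescaleEmpty, hij]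
  refine memT_of_nonneg (fun i j => ?_) (fun i j => mul_nonneg hθ (hT.2.1 i j).1) ?_
  · unfold rescaleEmpty
    split_ifs
    · linarith
    · exact le_rfl
    · exact mul_nonneg hθ (hT.1 i j).1
  · have htot := hT.2.2
    simp only [Finset.sum_add_distrib] at htot
    simp only [hdecomp, Pi.smul_apply, smul_eq_mul, Finset.sum_add_distrib, Finset.sum_ite_eq,
      Finset.mem_univ, if_true, Finset.sum_sub_distrib, Finset.sum_ite_eq', ← Finset.mul_sum]
    linear_combination θ * htot

-- The constraints of `FluidFeasible`, with complementarity replaced by `0 < e i i ↔ 0 < a i`.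
structure FluidBalanced (np : NetParams r) (q e f : Mat r) (a : Fin r → ℝ) : Prop where
  routing : IsRouting q
  ride_balance : ∀ i j, np.lam i * np.P i j * a i = np.mu i j * f i j
  offDiag_balance : ∀ i j, i ≠ j → np.mu i j * e i j = q i j * ∑ k, np.mu k i * f k i
  diag_balance : ∀ i, np.lam i * a i =
    (∑ k ∈ univ.filter (fun k => k ≠ i), np.mu k i * e k i) + q i i * ∑ k, np.mu k i * f k i
  idle_pos_iff : ∀ i, 0 < e i i ↔ 0 < a i
  memT : MemT e f
  nonneg : ∀ i, 0 ≤ a i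

namespace FluidBalanced
variable {np : NetParams r} {q e f : Mat r} {a : Fin r → ℝ}

theorem exists_pos (h : FluidBalanced np q e f a) : ∃ i, 0 < a i := by
  by_contra! ha
  have ha0 : ∀ i, a i = 0 := fun i => le_antisymm (ha i) (h.nonneg i)
  have hf : ∀ i j, f i j = 0 := fun i j => by
    have := h.ride_balance i j
    rw [ha0, mul_zero, eq_comm, mul_eq_zero] at this
    exact this.resolve_left (np.mu_pos i j).ne'
  have he : ∀ i j, e i j = 0 := fun i j => by
    by_cases hij : i = j
    · subst hij
      exact le_antisymm (not_lt.1 fun hpos => (ha0 i ▸ (h.idle_pos_iff i).1 hpos).false)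
        (h.memT.1 i i).1
    · have := h.offDiag_balance i j hij
      simp only [hf, mul_zero, Finset.sum_const_zero, mul_eq_zero] at this
      exact this.resolve_left (np.mu_pos i j).ne'
  have := h.memT.2.2
  simp [he, hf] at this

theorem fluidFeasible_rescale (h : FluidBalanced np q e f a) {θ : ℝ} (hθ : 0 ≤ θ)
    {i₀ : Fin r} (ha : ∀ i, θ * a i ≤ 1) (hR : θ * (1 - ∑ k, e k k) ≤ 1)
    (hcompl : (1 - θ * a i₀) * (1 - θ * (1 - ∑ k, e k k)) = 0) :
    FluidFeasible np q (rescaleEmpty e θ i₀) (θ • f) (θ • a) := by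
  have hθf : ∀ i, ∑ k, np.mu k i * (θ • f) k i = θ * ∑ k, np.mu k i * f k i := by
    intro i
    simp only [Pi.smul_apply, smul_eq_mul, Finset.mul_sum]
    exact Finset.sum_congr rfl fun k _ => by ring
  refine ⟨h.routing, fun i j => ?_, fun i j hij => ?_, fun i => ?_, fun i => ?_,
    memT_rescaleEmpty h.memT hθ hR i₀, fun i => ⟨mul_nonneg hθ (h.nonneg i), ha i⟩⟩
  · simp only [Pi.smul_apply, smul_eq_mul]
    linear_combination θ * h.ride_balance i j
  · simp only [rescaleEmpty, if_neg hij, hθf]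
    linear_combination θ * h.offDiag_balance i j hij
  · have hoff : ∑ k ∈ univ.filter (fun k => k ≠ i), np.mu k i * rescaleEmpty e θ i₀ k i
        = θ * ∑ k ∈ univ.filter (fun k => k ≠ i), np.mu k i * e k i := by
      rw [Finset.mul_sum]
      refine Finset.sum_congr rfl fun k hk => ?_
      simp only [rescaleEmpty, if_neg (Finset.mem_filter.1 hk).2]
      ring
    rw [hoff, hθf]
    simp only [Pi.smul_apply, smul_eq_mul]
    linear_combination θ * h.diag_balance i
  · by_cases hi : i = i₀
    · subst hi
      simpa [rescaleEmpty] using hcompl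
    · simp [rescaleEmpty, hi]

theorem exists_feasible_objU_gt (h : FluidBalanced np q e f a) {c : Mat r}
    (hc : ∀ i j, 0 < c i j) (ha1 : ∀ i, a i < 1) :
    ∃ q' e' f' a', FluidFeasible np q' e' f' a' ∧ objU np c a < objU np c a' := by
  obtain ⟨i₁, hi₁⟩ := h.exists_pos
  obtain ⟨i₀, -, hi₀⟩ := Finset.exists_max_image univ a ⟨i₁, Finset.mem_univ _⟩
  have hS : 0 < ∑ i, e i i := ((h.idle_pos_iff i₁).2 hi₁).trans_le
    (Finset.single_le_sum (fun i _ => (h.memT.1 i i).1) (Finset.mem_univ i₁))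
  set κ := max (1 - ∑ i, e i i) (a i₀)
  have hκ0 : 0 < κ :=
    (hi₁.trans_le (hi₀ i₁ (Finset.mem_univ _))).trans_le (le_max_right _ _)
  have hκinv : κ⁻¹ * κ = 1 := inv_mul_cancel₀ hκ0.ne'
  have hκ1 : 1 < κ⁻¹ := (one_lt_inv₀ hκ0).2 (max_lt (by linarith) (ha1 i₀))
  have hle : ∀ {t}, t ≤ κ → κ⁻¹ * t ≤ 1 := fun ht =>
    hκinv ▸ mul_le_mul_of_nonneg_left ht (inv_nonneg.2 hκ0.le)
  refine ⟨q, rescaleEmpty e κ⁻¹ i₀, κ⁻¹ • f, κ⁻¹ • a,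
    h.fluidFeasible_rescale (by positivity)
    (fun i => hle ((hi₀ i (Finset.mem_univ i)).trans (le_max_right _ _)))
    (hle (le_max_left _ _)) ?_, ?_⟩
  · rcases max_choice (1 - ∑ i, e i i) (a i₀) with hκ | hκ <;> rw [← hκ, hκinv] <;> ring
  · rw [objU_smul]
    nlinarith [objU_pos np hc h.nonneg hi₁]

end FluidBalanced
end Fluid

section Chain
variable {r : ℕ}

def states (r N : ℕ) : Finset (NState r) :=
  {x ∈ Finset.Iic (fun _ _ => N) ×ˢ Finset.Iic (fun _ _ => N) | totalCars x = N}

theorem le_totalCars (x : NState r) (i j : Fin r) :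
    x.1 i j ≤ totalCars x ∧ x.2 i j ≤ totalCars x := by
  have := le_sum_sum (f := fun i j => x.1 i j + x.2 i j) (fun _ _ => Nat.zero_le _) i j
  unfold totalCars
  omega

theorem mem_states {N : ℕ} {x : NState r} : x ∈ states r N ↔ totalCars x = N := by
  refine ⟨fun h => (Finset.mem_filter.1 h).2, fun h => Finset.mem_filter.2 ⟨?_, h⟩⟩
  simp only [Finset.mem_product, Finset.mem_Iic, Pi.le_def]
  exact ⟨fun i j => h ▸ (le_totalCars x i j).1, fun i j => h ▸ (le_totalCars x i j).2⟩

theorem memT_scale {N : ℕ} (hN : 1 ≤ N) {x : NState r} (hx : totalCars x = N) :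
    MemT (scale N x.1) (scale N x.2) := by
  have hN0 : (N : ℝ) ≠ 0 := by positivity
  refine memT_of_nonneg (fun i j => by unfold scale; positivity)
    (fun i j => by unfold scale; positivity) ?_
  simp only [scale, ← add_div, ← Finset.sum_div]
  rw [div_eq_one_iff_eq hN0, ← hx]
  simp [totalCars]

theorem isRouting_of_mem_states {Q : Mat r → Mat r → Mat r}
    (hQ : ∀ e f : Mat r, MemT e f → IsRouting (Q e f)) {N : ℕ} (hN : 1 ≤ N) {x : NState r}
    (hx : x ∈ states r N) : IsRouting (Q (scale N x.1) (scale N x.2)) :=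
  hQ _ _ (memT_scale hN (mem_states.1 hx))

theorem cast_incE (M : CMat r) (a b i j : Fin r) :
    ((incE M a b i j : ℕ) : ℝ) = M i j + if i = a ∧ j = b then 1 else 0 := by
  unfold incE; split_ifs <;> push_cast <;> ring

-- `decE` truncates at zero, hence the positivity condition.
theorem cast_decE (M : CMat r) (a b i j : Fin r) :
    ((decE M a b i j : ℕ) : ℝ) = M i j - if i = a ∧ j = b ∧ 0 < M a b then 1 else 0 := by
  unfold decE
  by_cases hij : i = a ∧ j = b
  · obtain ⟨rfl, rfl⟩ := hij
    rcases (M i j).eq_zero_or_pos with h | h <;> simp [h]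
  · rw [if_neg hij, if_neg fun h => hij ⟨h.1, h.2.1⟩, sub_zero]

theorem cast_emptyTarget_fst (x : NState r) (i j a b : Fin r) :
    (((emptyTarget x i j).1 a b : ℕ) : ℝ) = x.1 a b +
      ((if a = j ∧ b = j then 1 else 0) - if a = i ∧ b = j ∧ 0 < x.1 i j then 1 else 0) := by
  simp only [emptyTarget, cast_incE, cast_decE]
  ring

variable (np : NetParams r) (Q : Mat r → Mat r → Mat r) (N : ℕ)

noncomputable def transitionSum (x : NState r) (h : NState r → ℝ) : ℝ :=
  (∑ i ∈ univ.filter (fun i => 0 < x.1 i i), ∑ j,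
      N * np.lam i * np.P i j * h (pickupTarget x i j))
  + (∑ i, ∑ j, ∑ k,
      np.mu i j * x.2 i j * Q (scale N x.1) (scale N x.2) j k * h (dropoffTarget x i j k))
  + ∑ i, ∑ j ∈ univ.filter (fun j => i ≠ j), np.mu i j * x.1 i j * h (emptyTarget x i j)

theorem hasSum_ctmcRate_mul (x : NState r) (h : NState r → ℝ) :
    HasSum (fun y => ctmcRate np Q N x y * h y) (transitionSum np Q N x h) := by
  have hp := hasSum_sum fun i (_ : i ∈ univ) => hasSum_sum fun j (_ : j ∈ univ) =>
    hasSum_ite_and_eq_mul (0 < x.1 i i) (pickupTarget x i j) (N * np.lam i * np.P i j) h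
  have hd := hasSum_sum fun i (_ : i ∈ univ) => hasSum_sum fun j (_ : j ∈ univ) =>
    hasSum_sum fun k (_ : k ∈ univ) => hasSum_ite_and_eq_mul True (dropoffTarget x i j k)
      (np.mu i j * x.2 i j * Q (scale N x.1) (scale N x.2) j k) h
  have he := hasSum_sum fun i (_ : i ∈ univ) => hasSum_sum fun j (_ : j ∈ univ) =>
    hasSum_ite_and_eq_mul (i ≠ j) (emptyTarget x i j) (np.mu i j * x.1 i j) h
  simp only [true_and, if_true, Finset.sum_ite_irrel, Finset.sum_const_zero,
    ← Finset.sum_filter] at hp hd he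
  simpa only [ctmcRate, transitionSum, add_mul, Finset.sum_mul] using (hp.add hd).add he

theorem sum_pickup_le_ctmcRate {x : NState r} (hx : IsRouting (Q (scale N x.1) (scale N x.2)))
    (y : NState r) :
    (∑ i, ∑ j, if 0 < x.1 i i ∧ y = pickupTarget x i j
        then (N : ℝ) * np.lam i * np.P i j else 0)
      ≤ ctmcRate np Q N x y := by
  have hdrop : 0 ≤ ∑ i, ∑ j, ∑ k, if y = dropoffTarget x i j k
      then np.mu i j * (x.2 i j : ℝ) * Q (scale N x.1) (scale N x.2) j k else 0 :=
    Finset.sum_nonneg fun i _ => Finset.sum_nonneg fun j _ => Finset.sum_nonneg fun k _ => by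
      have := (np.mu_pos i j).le; have := hx.1 j k
      split_ifs <;> positivity
  have hempty : 0 ≤ ∑ i, ∑ j, if i ≠ j ∧ y = emptyTarget x i j
      then np.mu i j * (x.1 i j : ℝ) else 0 :=
    Finset.sum_nonneg fun i _ => Finset.sum_nonneg fun j _ => by
      have := (np.mu_pos i j).le
      split_ifs <;> positivity
  unfold ctmcRate
  linarith

theorem ctmcRate_nonneg {x : NState r} (hx : IsRouting (Q (scale N x.1) (scale N x.2)))
    (y : NState r) : 0 ≤ ctmcRate np Q N x y :=
  (Finset.sum_nonneg fun i _ => Finset.sum_nonneg fun j _ => by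
    have := (np.lam_pos i).le; have := np.P_nonneg i j
    split_ifs <;> positivity).trans (sum_pickup_le_ctmcRate np Q N hx y)

theorem le_ctmcRate_pickupTarget {x : NState r}
    (hx : IsRouting (Q (scale N x.1) (scale N x.2))) {i : Fin r} (hi : 0 < x.1 i i) (j : Fin r) :
    N * np.lam i * np.P i j ≤ ctmcRate np Q N x (pickupTarget x i j) := by
  have hterm := le_sum_sum (fun i' j' => by
    have := (np.lam_pos i').le; have := np.P_nonneg i' j'
    exact (by split_ifs <;> positivity : (0 : ℝ) ≤ if 0 < x.1 i' i' ∧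
      pickupTarget x i j = pickupTarget x i' j' then N * np.lam i' * np.P i' j' else 0)) i j
  rw [if_pos ⟨hi, rfl⟩] at hterm
  exact hterm.trans (sum_pickup_le_ctmcRate np Q N hx _)

theorem transitionSum_sub_snd (x : NState r) (a b : Fin r)
    (hrow : ∑ k, Q (scale N x.1) (scale N x.2) b k = 1) :
    transitionSum np Q N x (fun y => (y.2 a b : ℝ) - x.2 a b) =
      N * np.lam a * np.P a b * (if 0 < x.1 a a then 1 else 0) - np.mu a b * x.2 a b := by
  rcases (x.2 a b).eq_zero_or_pos with h | h <;>
    simp [transitionSum, pickupTarget, dropoffTarget, emptyTarget, cast_incE, cast_decE, ite_and,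
      Finset.sum_ite_eq, ← Finset.mul_sum, hrow, h, sub_eq_add_neg]

theorem transitionSum_sub_fst_of_ne (x : NState r) {a b : Fin r} (hab : a ≠ b) :
    transitionSum np Q N x (fun y => (y.1 a b : ℝ) - x.1 a b) =
      ∑ i, np.mu i a * x.2 i a * Q (scale N x.1) (scale N x.2) a b - np.mu a b * x.1 a b := by
  rcases (x.1 a b).eq_zero_or_pos with h | h <;>
    simp [transitionSum, pickupTarget, dropoffTarget, cast_emptyTarget_fst, cast_incE, cast_decE,
      ite_and, Finset.sum_ite_eq, hab, hab.symm, h, sub_eq_add_neg, mul_add, mul_neg,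
      Finset.sum_add_distrib, Finset.sum_neg_distrib]

theorem transitionSum_sub_fst_self (x : NState r) (a : Fin r) :
    transitionSum np Q N x (fun y => (y.1 a a : ℝ) - x.1 a a) =
      ∑ i, np.mu i a * x.2 i a * Q (scale N x.1) (scale N x.2) a a
        + ∑ i ∈ univ.filter (· ≠ a), np.mu i a * x.1 i a
        - N * np.lam a * (if 0 < x.1 a a then 1 else 0) := by
  by_cases h : 0 < x.1 a a <;>
    simp [transitionSum, pickupTarget, dropoffTarget, cast_emptyTarget_fst, cast_incE, cast_decE,
      ite_and, Finset.sum_ite_eq, ← Finset.mul_sum, np.P_rowsum, sub_eq_add_neg, mul_add, mul_neg,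
      Finset.sum_add_distrib, Finset.sum_neg_distrib, Finset.sum_filter, h, add_comm, add_left_comm]

end Chain

section Stationary
variable {r : ℕ} {np : NetParams r} {Q : Mat r → Mat r → Mat r} {N : ℕ}
  {π : NState r → ℝ}

noncomputable def meanEmpty (N : ℕ) (π : NState r → ℝ) : Mat r :=
  fun i j => (∑ x ∈ states r N, π x * x.1 i j) / N

noncomputable def meanFull (N : ℕ) (π : NState r → ℝ) : Mat r :=
  fun i j => (∑ x ∈ states r N, π x * x.2 i j) / N

noncomputable def meanRouted (np : NetParams r) (Q : Mat r → Mat r → Mat r) (N : ℕ)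
    (π : NState r → ℝ) : Mat r :=
  fun a b => (∑ x ∈ states r N,
    π x * ∑ i, np.mu i a * x.2 i a * Q (scale N x.1) (scale N x.2) a b) / N

theorem sum_meanRouted (hQx : ∀ x ∈ states r N, IsRouting (Q (scale N x.1) (scale N x.2)))
    (a : Fin r) : ∑ b, meanRouted np Q N π a b = ∑ k, np.mu k a * meanFull N π k a :=
  calc ∑ b, meanRouted np Q N π a b
      = (∑ x ∈ states r N, π x * ∑ i, np.mu i a * x.2 i a) / N := by
        simp only [meanRouted, ← Finset.sum_div, Finset.mul_sum]
        rw [Finset.sum_comm]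
        refine congrArg (· / _) (Finset.sum_congr rfl fun x hx => ?_)
        simp only [← Finset.mul_sum]
        rw [Finset.sum_comm]
        exact congrArg _ (Finset.sum_congr rfl fun i _ => by
          rw [← Finset.mul_sum, (hQx x hx).2 a, mul_one])
    _ = ∑ k, np.mu k a * meanFull N π k a := by
        simp only [meanFull, mul_div_assoc', ← Finset.sum_div, Finset.mul_sum]
        rw [Finset.sum_comm]
        exact congrArg (· / _) (Finset.sum_congr rfl fun _ _ =>
          Finset.sum_congr rfl fun _ _ => by ring)

namespace CtmcIsStationary

theorem eq_zero_of_notMem (hstat : CtmcIsStationary np Q N π) {x : NState r}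
    (hx : x ∉ states r N) : π x = 0 :=
  hstat.2.1 x fun h => hx (mem_states.2 h)

theorem sum_states (hstat : CtmcIsStationary np Q N π) : ∑ x ∈ states r N, π x = 1 := by
  rw [← hstat.2.2.1, tsum_eq_sum fun x hx => hstat.eq_zero_of_notMem hx]

theorem sum_mul_transitionSum_eq_zero (hstat : CtmcIsStationary np Q N π)
    (g : NState r → ℝ) :
    ∑ x ∈ states r N, π x * transitionSum np Q N x (fun y => g y - g x) = 0 := by
  simpa only [(hasSum_ctmcRate_mul np Q N _ _).tsum_eq] using
    sum_mul_tsum_rate_mul_sub_eq_zero (fun x hx => hstat.eq_zero_of_notMem hx)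
      (fun x h => (hasSum_ctmcRate_mul np Q N x h).summable) hstat.2.2.2 g

theorem routed_balance (hstat : CtmcIsStationary np Q N π) {a b : Fin r} (hab : a ≠ b) :
    ∑ x ∈ states r N, π x * ∑ i, np.mu i a * x.2 i a * Q (scale N x.1) (scale N x.2) a b
      = np.mu a b * ∑ x ∈ states r N, π x * x.1 a b := by
  have h := hstat.sum_mul_transitionSum_eq_zero fun y => (y.1 a b : ℝ)
  simp only [transitionSum_sub_fst_of_ne np Q N _ hab] at h
  rw [← sub_eq_zero, Finset.mul_sum, ← Finset.sum_sub_distrib]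
  exact (Finset.sum_congr rfl fun x _ => by ring).trans h

theorem idle_balance (hstat : CtmcIsStationary np Q N π) (a : Fin r) :
    N * np.lam a * ∑ x ∈ states r N, π x * (if 0 < x.1 a a then 1 else 0)
      = ∑ x ∈ states r N, π x * ∑ i, np.mu i a * x.2 i a * Q (scale N x.1) (scale N x.2) a a
        + ∑ i ∈ univ.filter (· ≠ a), np.mu i a * ∑ x ∈ states r N, π x * x.1 i a := by
  have h := hstat.sum_mul_transitionSum_eq_zero fun y => (y.1 a a : ℝ)
  simp only [transitionSum_sub_fst_self] at h
  have hswap : ∑ i ∈ univ.filter (· ≠ a), np.mu i a * ∑ x ∈ states r N, π x * x.1 i a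
      = ∑ x ∈ states r N, π x * ∑ i ∈ univ.filter (· ≠ a), np.mu i a * x.1 i a := by
    simp only [Finset.mul_sum]
    rw [Finset.sum_comm]
    exact Finset.sum_congr rfl fun _ _ => Finset.sum_congr rfl fun _ _ => by ring
  rw [hswap, ← sub_eq_zero, ← neg_eq_zero, Finset.mul_sum, ← Finset.sum_add_distrib,
    ← Finset.sum_sub_distrib, ← Finset.sum_neg_distrib]
  exact (Finset.sum_congr rfl fun x _ => by ring).trans h

theorem exists_pos_fst_self_eq_zero (hstat : CtmcIsStationary np Q N π)
    (hQx : ∀ x ∈ states r N, IsRouting (Q (scale N x.1) (scale N x.2))) (a : Fin r) :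
    ∃ y ∈ states r N, 0 < π y ∧ y.1 a a = 0 := by
  have hsupp : ((states r N).filter (0 < π ·)).Nonempty := by
    obtain ⟨x, hx, hπx⟩ := Finset.exists_ne_zero_of_sum_ne_zero
      (hstat.sum_states.symm ▸ one_ne_zero : ∑ x ∈ states r N, π x ≠ 0)
    exact ⟨x, Finset.mem_filter.2 ⟨hx, (hstat.1 x).lt_of_ne' hπx⟩⟩
  obtain ⟨y, hy, hmin⟩ := Finset.exists_min_image _ (fun y : NState r => y.1 a a) hsupp
  obtain ⟨hys, hπy⟩ := Finset.mem_filter.1 hy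
  refine ⟨y, hys, hπy, Nat.eq_zero_of_not_pos fun hya => ?_⟩
  -- a pickup at `a` leads to a state of the support with one idle car fewer at `a`
  obtain ⟨j, hj⟩ := np.exists_P_pos a
  have hrate : 0 < ctmcRate np Q N y (pickupTarget y a j) := by
    have := np.lam_pos a
    have : 0 < N := mem_states.1 hys ▸ hya.trans_le (le_totalCars y a a).1
    exact (by positivity : (0 : ℝ) < N * np.lam a * np.P a j).trans_le
      (le_ctmcRate_pickupTarget np Q N (hQx y hys) hya j)
  have hπz : 0 < π (pickupTarget y a j) :=
    pos_of_rate_pos hstat.1 (fun x hx => hstat.eq_zero_of_notMem hx)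
      (fun x hx => ctmcRate_nonneg np Q N (hQx x hx)) hstat.2.2.2 hπy hrate
  have hzs : pickupTarget y a j ∈ states r N :=
    by_contra fun h => hπz.ne' (hstat.eq_zero_of_notMem h)
  have := hmin _ (Finset.mem_filter.2 ⟨hzs, hπz⟩)
  simp only [pickupTarget, decE, and_self, if_true] at this
  omega

theorem probOf_idle (hstat : CtmcIsStationary np Q N π) (a : Fin r) :
    probOf π {x | 0 < x.1 a a} = ∑ x ∈ states r N, π x * if 0 < x.1 a a then 1 else 0 := by
  rw [probOf, tsum_eq_sum fun x hx => by simp [Set.indicator_apply, hstat.eq_zero_of_notMem hx]]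
  exact Finset.sum_congr rfl fun x _ => by simp [Set.indicator_apply]

theorem probOf_idle_lt_one (hstat : CtmcIsStationary np Q N π)
    (hQx : ∀ x ∈ states r N, IsRouting (Q (scale N x.1) (scale N x.2))) (a : Fin r) :
    probOf π {x | 0 < x.1 a a} < 1 := by
  obtain ⟨y, hys, hπy, hya⟩ := hstat.exists_pos_fst_self_eq_zero hQx a
  have hnn : ∀ x ∈ states r N, 0 ≤ π x * (1 - if 0 < x.1 a a then 1 else 0) := fun x _ =>
    mul_nonneg (hstat.1 x) (by split_ifs <;> norm_num)
  have hle := Finset.single_le_sum hnn hys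
  simp only [hya, lt_irrefl, if_false, sub_zero, mul_one] at hle
  rw [hstat.probOf_idle, ← sub_pos]
  calc 0 < π y := hπy
    _ ≤ _ := hle
    _ = _ := by simp only [mul_sub, mul_one, Finset.sum_sub_distrib, hstat.sum_states]

theorem ride_balance (hstat : CtmcIsStationary np Q N π)
    (hQx : ∀ x ∈ states r N, IsRouting (Q (scale N x.1) (scale N x.2))) (a b : Fin r) :
    N * np.lam a * np.P a b * ∑ x ∈ states r N, π x * (if 0 < x.1 a a then 1 else 0)
      = np.mu a b * ∑ x ∈ states r N, π x * x.2 a b := by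
  have h := hstat.sum_mul_transitionSum_eq_zero fun y => (y.2 a b : ℝ)
  rw [Finset.sum_congr rfl fun x hx => by
    rw [transitionSum_sub_snd np Q N x a b ((hQx x hx).2 b)]] at h
  rw [← sub_eq_zero, Finset.mul_sum, Finset.mul_sum, ← Finset.sum_sub_distrib]
  exact (Finset.sum_congr rfl fun x _ => by ring).trans h

theorem memT_mean (hstat : CtmcIsStationary np Q N π) (hN : 1 ≤ N) :
    MemT (meanEmpty N π) (meanFull N π) := by
  have hN0 : (N : ℝ) ≠ 0 := by positivity
  refine memT_of_nonneg (fun i j => ?_) (fun i j => ?_) ?_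
  · exact div_nonneg (Finset.sum_nonneg fun x _ => mul_nonneg (hstat.1 x) (by positivity))
      (by positivity)
  · exact div_nonneg (Finset.sum_nonneg fun x _ => mul_nonneg (hstat.1 x) (by positivity))
      (by positivity)
  have htot : ∀ x ∈ states r N, ∑ i, ∑ j, (π x * x.1 i j + π x * x.2 i j) = π x * N :=
    fun x hx => by simp [← mem_states.1 hx, totalCars, Finset.mul_sum, mul_add]
  simp only [meanEmpty, meanFull, ← add_div, ← Finset.sum_div, ← Finset.sum_add_distrib]
  simp_rw [Finset.sum_comm (s := (univ : Finset (Fin r))) (t := states r N)]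
  rw [Finset.sum_congr rfl htot, ← Finset.sum_mul, hstat.sum_states, one_mul, div_self hN0]

theorem meanEmpty_self_pos_iff (hstat : CtmcIsStationary np Q N π) (hN : 1 ≤ N)
    (a : Fin r) :
    0 < meanEmpty N π a a ↔ 0 < probOf π {x | 0 < x.1 a a} := by
  have hN0 : (0 : ℝ) < N := by positivity
  rw [hstat.probOf_idle, meanEmpty, div_pos_iff_of_pos_right hN0,
    Finset.sum_pos_iff_of_nonneg fun x _ => mul_nonneg (hstat.1 x) (by positivity),
    Finset.sum_pos_iff_of_nonneg fun x _ => mul_nonneg (hstat.1 x) (by positivity)]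
  refine exists_congr fun x => and_congr_right fun _ => ?_
  rcases (x.1 a a).eq_zero_or_pos with h | h <;> simp [h]

theorem meanRouted_nonneg (hstat : CtmcIsStationary np Q N π)
    (hQx : ∀ x ∈ states r N, IsRouting (Q (scale N x.1) (scale N x.2))) (a b : Fin r) :
    0 ≤ meanRouted np Q N π a b :=
  div_nonneg (Finset.sum_nonneg fun x hx => mul_nonneg (hstat.1 x)
    (Finset.sum_nonneg fun i _ => by
      have := (np.mu_pos i a).le; have := (hQx x hx).1 a b; positivity)) (Nat.cast_nonneg N)

theorem exists_fluidBalanced (hstat : CtmcIsStationary np Q N π)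
    (hQx : ∀ x ∈ states r N, IsRouting (Q (scale N x.1) (scale N x.2))) (hN : 1 ≤ N) :
    ∃ q, FluidBalanced np q (meanEmpty N π) (meanFull N π)
      (fun i => probOf π {x | 0 < x.1 i i}) := by
  have hN0 : (N : ℝ) ≠ 0 := by positivity
  obtain ⟨q, hq, hGq⟩ := exists_isRouting_mul_sum (hstat.meanRouted_nonneg hQx)
  refine ⟨q, hq, fun a b => ?_, fun a b hab => ?_, fun a => ?_, fun a => ?_,
    hstat.memT_mean hN, fun a => ?_⟩
  · simp only [hstat.probOf_idle, meanFull]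
    field_simp
    linear_combination hstat.ride_balance hQx a b
  · rw [← sum_meanRouted hQx, ← hGq]
    simp only [meanEmpty, meanRouted, hstat.routed_balance hab]
    ring
  · rw [← sum_meanRouted hQx, ← hGq]
    simp only [hstat.probOf_idle, meanEmpty, meanRouted, mul_div_assoc', ← Finset.sum_div]
    field_simp
    linear_combination hstat.idle_balance a
  · exact hstat.meanEmpty_self_pos_iff hN a
  · rw [hstat.probOf_idle]
    exact Finset.sum_nonneg fun x _ => mul_nonneg (hstat.1 x) (by positivity)

end CtmcIsStationary

end Stationary

theorem stmt_1_general {r : ℕ} (np : NetParams r)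
    (c : Mat r) (hc : ∀ i j, 0 < c i j)
    (Q : Mat r → Mat r → Mat r)
    (hQ : ∀ e f : Mat r, MemT e f → IsRouting (Q e f))
    (N : ℕ) (hN : 1 ≤ N)
    (π : NState r → ℝ) (hstat : CtmcIsStationary np Q N π)
    (abar : Fin r → ℝ)
    (hopt : ∀ (q' e' f' : Mat r) (a' : Fin r → ℝ),
      FluidFeasible np q' e' f' a' → objU np c a' ≤ objU np c abar) :
    (∑ i, ∑ j, probOf π {x | 0 < x.1 i i} * np.lam i * np.P i j * c i j)
      < objU np c abar := by
  have hQx : ∀ x ∈ states r N, IsRouting (Q (scale N x.1) (scale N x.2)) :=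
    fun x hx => isRouting_of_mem_states hQ hN hx
  obtain ⟨q, hbalanced⟩ := hstat.exists_fluidBalanced hQx hN
  obtain ⟨q', e', f', a', hfeas, hlt⟩ :=
    hbalanced.exists_feasible_objU_gt hc (hstat.probOf_idle_lt_one hQx)
  exact hlt.trans_le (hopt q' e' f' a' hfeas)

/-- Theorem 2(a): for any (possibly state-dependent) routing policy under which
the `N`-car CTMC has a unique stationary distribution, the steady-state utility
is strictly smaller than the optimal value of the fluid-based optimization. -/
theorem stmt_1 {r : ℕ} (hr : 1 ≤ r) (np : NetParams r)
    (c : Mat r) (hc : ∀ i j, 0 < c i j)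
    (Q : Mat r → Mat r → Mat r)
    (hQ : ∀ e f : Mat r, MemT e f → IsRouting (Q e f))
    (N : ℕ) (hN : 1 ≤ N)
    (π : NState r → ℝ) (hstat : CtmcIsStationary np Q N π)
    (huniq : ∀ π' : NState r → ℝ, CtmcIsStationary np Q N π' → π' = π)
    (qs ebar fbar : Mat r) (abar : Fin r → ℝ)
    (hfeas : FluidFeasible np qs ebar fbar abar)
    (hopt : ∀ (q' e' f' : Mat r) (a' : Fin r → ℝ),
      FluidFeasible np q' e' f' a' → objU np c a' ≤ objU np c abar) :
    (∑ i, ∑ j, probOf π {x | 0 < x.1 i i} * np.lam i * np.P i j * c i j)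
      < objU np c abar :=
  stmt_1_general np c hc Q hQ N hN π hstat abar hopt
end

section
/- (1) If a routing matrix q together with (ē, f̄, ā) is feasible for the fluid-based optimization problem, then (ē, f̄, ā) satisfies the relaxed constraints together with the complementarity constraint. (2) Conversely, suppose (ē, f̄, ā) satisfies the relaxed constraints together with the complementarity constraint, and suppose Σ_k μ_{ki} f̄_{ki} > 0 for every i. Define q_{ij} = μ_{ij} ē_{ij} / (Σ_k μ_{ki} f̄_{ki}) for i ≠ j and q_{ii} = (λ_i ā_i − Σ_{k≠i} μ_{ki} ē_{ki}) / (Σ_k μ_{ki} f̄_{ki}). Then q is a routing matrix (entries nonnegative, rows summing to one) and (q, ē, f̄, ā) is feasible for the fluid-based optimization problem. -/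
open Finset Filter Topology MeasureTheory

/-- `(ebar, fbar, abar)` satisfies the relaxed constraints. -/
def RelaxedFeasible {r : ℕ} (np : NetParams r) (ebar fbar : Mat r)
    (abar : Fin r → ℝ) : Prop :=
  (∀ i j, np.lam i * np.P i j * abar i = np.mu i j * fbar i j) ∧
  (∀ i j, i ≠ j → np.mu i j * ebar i j ≤ ∑ k, np.mu k i * fbar k i) ∧
  (∀ i, (∑ k ∈ Finset.univ.filter (fun k => k ≠ i), np.mu k i * ebar k i)
      ≤ np.lam i * abar i) ∧
  (∀ i, np.lam i * abar i ≤
    (∑ k ∈ Finset.univ.filter (fun k => k ≠ i), np.mu k i * ebar k i)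
      + ∑ k, np.mu k i * fbar k i) ∧
  (∀ i, np.lam i * abar i
      + (∑ j ∈ Finset.univ.filter (fun j => j ≠ i), np.mu i j * ebar i j)
    = (∑ k ∈ Finset.univ.filter (fun k => k ≠ i), np.mu k i * ebar k i)
      + ∑ k, np.mu k i * fbar k i) ∧
  MemT ebar fbar ∧
  (∀ i, 0 ≤ abar i ∧ abar i ≤ 1)

/-- The complementarity constraint `(1 − ā_i) ē_{ii} = 0` for all `i`. -/
def Complementarity {r : ℕ} (ebar : Mat r) (abar : Fin r → ℝ) : Prop :=
  ∀ i, (1 - abar i) * ebar i i = 0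

/-- The routing matrix recovered from a solution of the relaxed constraints,
via equation (rp:intra). -/
noncomputable def qRecover {r : ℕ} (np : NetParams r) (ebar fbar : Mat r)
    (abar : Fin r → ℝ) : Mat r :=
  fun i j =>
    if i = j then
      (np.lam i * abar i
          - ∑ k ∈ Finset.univ.filter (fun k => k ≠ i), np.mu k i * ebar k i)
        / (∑ k, np.mu k i * fbar k i)
    else np.mu i j * ebar i j / (∑ k, np.mu k i * fbar k i)

/-
Write `S_i = Σ_k μ_{ki} f̄_{ki}` for the inflow of station `i`. Given a routing matrix, the
routing constraints say that `μ_{ij} ē_{ij} = q_{ij} S_i` for `j ≠ i` and that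
`λ_i ā_i - Σ_{k≠i} μ_{ki} ē_{ki} = q_{ii} S_i`. Since `0 ≤ q_{ij} ≤ 1`, these give the
inequalities of the relaxation, and summing over `j` with `Σ_j q_{ij} = 1` gives the flow
balance. Conversely, when `S_i > 0` these equations define `q` by division; the inequalities
make its entries nonnegative, and flow balance makes its rows sum to one.
-/

lemma Finset.sum_filter_ne_eq_sub {ι M : Type*} [Fintype ι] [DecidableEq ι] [AddCommGroup M]
    (g : ι → M) (i : ι) : ∑ j ∈ univ.filter (· ≠ i), g j = ∑ j, g j - g i := by
  rw [filter_ne', sum_erase_eq_sub (mem_univ i)]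

lemma IsRouting.le_one {r : ℕ} {q : Mat r} (hq : IsRouting q) (i j : Fin r) : q i j ≤ 1 :=
  hq.2 i ▸ single_le_sum (fun k _ => hq.1 i k) (mem_univ j)

lemma MemT.inflow_nonneg {r : ℕ} {e f : Mat r} (hT : MemT e f) (np : NetParams r) (i : Fin r) :
    0 ≤ ∑ k, np.mu k i * f k i :=
  sum_nonneg fun k _ => mul_nonneg (np.mu_pos k i).le (hT.2.1 k i).1

namespace FluidFeasible

variable {r : ℕ} {np : NetParams r} {q ebar fbar : Mat r} {abar : Fin r → ℝ}

lemma complementarity (h : FluidFeasible np q ebar fbar abar) : Complementarity ebar abar :=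
  h.2.2.2.2.1

lemma outflow_eq (h : FluidFeasible np q ebar fbar abar) (i : Fin r) :
    ∑ j ∈ univ.filter (· ≠ i), np.mu i j * ebar i j
      = (1 - q i i) * ∑ k, np.mu k i * fbar k i := by
  rw [sum_congr rfl fun j hj => h.2.2.1 i j (mem_filter.mp hj).2.symm, ← sum_mul,
    Finset.sum_filter_ne_eq_sub (q i), h.1.2 i]

lemma relaxedFeasible (h : FluidFeasible np q ebar fbar abar) :
    RelaxedFeasible np ebar fbar abar := by
  have hout := h.outflow_eq
  obtain ⟨hq, hflow, hintra, hself, -, hT, hab⟩ := h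
  have hS := hT.inflow_nonneg np
  refine ⟨hflow, fun i j hij => ?_, fun i => ?_, fun i => ?_, fun i => ?_, hT, hab⟩
  · rw [hintra i j hij]
    exact mul_le_of_le_one_left (hS i) (hq.le_one i j)
  · linarith [hself i, mul_nonneg (hq.1 i i) (hS i)]
  · linarith [hself i, mul_le_of_le_one_left (hS i) (hq.le_one i i)]
  · linarith [hself i, hout i]

end FluidFeasible

section qRecover

variable {r : ℕ} {np : NetParams r} {ebar fbar : Mat r} {abar : Fin r → ℝ} {i : Fin r}

lemma qRecover_mul_inflow_of_ne (hS : ∑ k, np.mu k i * fbar k i ≠ 0) {j : Fin r} (hij : i ≠ j) :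
    qRecover np ebar fbar abar i j * ∑ k, np.mu k i * fbar k i = np.mu i j * ebar i j := by
  rw [qRecover, if_neg hij, div_mul_cancel₀ _ hS]

lemma qRecover_self_mul_inflow (hS : ∑ k, np.mu k i * fbar k i ≠ 0) :
    qRecover np ebar fbar abar i i * ∑ k, np.mu k i * fbar k i
      = np.lam i * abar i - ∑ k ∈ univ.filter (· ≠ i), np.mu k i * ebar k i := by
  rw [qRecover, if_pos rfl, div_mul_cancel₀ _ hS]

lemma isRouting_qRecover (h : RelaxedFeasible np ebar fbar abar)
    (hS : ∀ i, 0 < ∑ k, np.mu k i * fbar k i) : IsRouting (qRecover np ebar fbar abar) := by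
  obtain ⟨-, -, hlow, -, hbal, hT, -⟩ := h
  refine ⟨fun i j => ?_, fun i => ?_⟩
  · unfold qRecover
    split_ifs with hij
    · exact div_nonneg (sub_nonneg.mpr (hij ▸ hlow i)) (hS i).le
    · exact div_nonneg (mul_nonneg (np.mu_pos i j).le (hT.1 i j).1) (hS i).le
  · have hSi := (hS i).ne'
    rw [← mul_left_inj' hSi, one_mul, sum_mul, ← add_sum_erase _ _ (mem_univ i),
      qRecover_self_mul_inflow hSi, ← filter_ne',
      sum_congr rfl fun j hj => qRecover_mul_inflow_of_ne hSi (mem_filter.mp hj).2.symm]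
    linarith [hbal i]

lemma fluidFeasible_qRecover (h : RelaxedFeasible np ebar fbar abar)
    (hC : Complementarity ebar abar) (hS : ∀ i, 0 < ∑ k, np.mu k i * fbar k i) :
    FluidFeasible np (qRecover np ebar fbar abar) ebar fbar abar := by
  refine ⟨isRouting_qRecover h hS, h.1, fun i _ hij => ?_, fun i => ?_, hC, h.2.2.2.2.2⟩
  · exact (qRecover_mul_inflow_of_ne (hS i).ne' hij).symm
  · rw [qRecover_self_mul_inflow (hS i).ne']
    ring

end qRecover

theorem stmt_3_general {r : ℕ} (np : NetParams r) :
    (∀ (q ebar fbar : Mat r) (abar : Fin r → ℝ),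
        FluidFeasible np q ebar fbar abar →
          RelaxedFeasible np ebar fbar abar ∧ Complementarity ebar abar) ∧
    (∀ (ebar fbar : Mat r) (abar : Fin r → ℝ),
        RelaxedFeasible np ebar fbar abar → Complementarity ebar abar →
        (∀ i, 0 < ∑ k, np.mu k i * fbar k i) →
          IsRouting (qRecover np ebar fbar abar) ∧
            FluidFeasible np (qRecover np ebar fbar abar) ebar fbar abar) :=
  ⟨fun _ _ _ _ h => ⟨h.relaxedFeasible, h.complementarity⟩,
    fun _ _ _ h hC hS => ⟨isRouting_qRecover h hS, fluidFeasible_qRecover h hC hS⟩⟩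

/-- Lemma 1 (relax0): the fluid-based feasibility constraints are equivalent to the
relaxed constraints together with the complementarity constraint, with the routing
matrix recovered by `qRecover` in the converse direction. -/
theorem stmt_3 {r : ℕ} (hr : 1 ≤ r) (np : NetParams r) :
    (∀ (q ebar fbar : Mat r) (abar : Fin r → ℝ),
        FluidFeasible np q ebar fbar abar →
          RelaxedFeasible np ebar fbar abar ∧ Complementarity ebar abar) ∧
    (∀ (ebar fbar : Mat r) (abar : Fin r → ℝ),
        RelaxedFeasible np ebar fbar abar → Complementarity ebar abar →
        (∀ i, 0 < ∑ k, np.mu k i * fbar k i) →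
          IsRouting (qRecover np ebar fbar abar) ∧
            FluidFeasible np (qRecover np ebar fbar abar) ebar fbar abar) :=
  stmt_3_general np
end

section
/- Let (ē*, f̄*, ā*) be optimal for the relaxed problem with rewards c_{ij} > 0, and suppose ā*_{i'} = 1 for some index i'. Define ẽ ∈ ℝ^{r×r} by ẽ_{ij} = ē*_{ij} for all i ≠ j, ẽ_{i'i'} = Σ_{i=1}^r ē*_{ii}, and ẽ_{ii} = 0 for i ≠ i'. Then (ẽ, f̄*, ā*) satisfies the relaxed constraints and the complementarity constraint, and has the same objective value as (ē*, f̄*, ā*); in particular (ẽ, f̄*, ā*) is also optimal for the relaxed problem. -/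
open Finset Filter Topology MeasureTheory

/-- The modification of `ē*` that piles all diagonal mass onto the region `i'`. -/
noncomputable def eTilde {r : ℕ} (ebar : Mat r) (i' : Fin r) : Mat r :=
  fun i j =>
    if i = j then (if i = i' then ∑ k, ebar k k else 0) else ebar i j

/-- Lemma 2, part 2: if an optimal solution of the relaxed problem has `ā*_{i'} = 1`
for some `i'`, then moving all diagonal mass of `ē*` to entry `(i',i')` yields a
solution that satisfies the relaxed constraints and the complementarity constraint,
has the same objective value, and is therefore also optimal. -/
theorem stmt_5 {r : ℕ} (hr : 1 ≤ r) (np : NetParams r) (c : Mat r)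
    (hc : ∀ i j, 0 < c i j)
    (ebar fbar : Mat r) (abar : Fin r → ℝ)
    (hfeas : RelaxedFeasible np ebar fbar abar)
    (hopt : ∀ (e' f' : Mat r) (a' : Fin r → ℝ),
      RelaxedFeasible np e' f' a' → objU np c a' ≤ objU np c abar)
    (i' : Fin r) (hi' : abar i' = 1) :
    RelaxedFeasible np (eTilde ebar i') fbar abar ∧
    Complementarity (eTilde ebar i') abar ∧
    objU np c abar = objU np c abar ∧
    (∀ (e' f' : Mat r) (a' : Fin r → ℝ),
      RelaxedFeasible np e' f' a' → objU np c a' ≤ objU np c abar) := by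
  obtain ⟨h1, h2, h3, h4, h5, ⟨he01, hf01, hsum⟩, h7⟩ := hfeas
  have hoff : ∀ i j : Fin r, i ≠ j → eTilde ebar i' i j = ebar i j := by
    intro i j hij; simp [eTilde, hij]
  have hdsum : ∑ k, eTilde ebar i' k k = ∑ k, ebar k k := by
    simp [eTilde, Finset.sum_ite_eq']
  have hSnn : 0 ≤ ∑ k, ebar k k :=
    Finset.sum_nonneg fun k _ => (he01 k k).1
  have hSle : ∑ k, ebar k k ≤ 1 := by
    rw [← hsum]
    apply Finset.sum_le_sum
    intro i _
    calc ebar i i ≤ ebar i i + fbar i i := le_add_of_nonneg_right (hf01 i i).1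
      _ ≤ ∑ j, (ebar i j + fbar i j) := by
        apply Finset.single_le_sum (f := fun j => ebar i j + fbar i j)
          (fun j _ => add_nonneg (he01 i j).1 (hf01 i j).1) (Finset.mem_univ i)
  have he01' : ∀ i j, eTilde ebar i' i j ∈ Set.Icc (0:ℝ) 1 := by
    intro i j
    by_cases hij : i = j
    · subst hij
      by_cases hii : i = i'
      · simp [eTilde, hii]; exact ⟨hSnn, hSle⟩
      · simp [eTilde, hii]
    · rw [hoff i j hij]; exact he01 i j
  have hrow : ∀ i : Fin r, ∑ j, eTilde ebar i' i j
      = (∑ j, ebar i j) + (eTilde ebar i' i i - ebar i i) := by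
    intro i
    have : ∑ j, (eTilde ebar i' i j - ebar i j) = eTilde ebar i' i i - ebar i i := by
      apply Finset.sum_eq_single i
      · intro j _ hj; rw [hoff i j (Ne.symm hj)]; ring
      · simp
    have h := this
    rw [Finset.sum_sub_distrib] at h
    linarith
  have hsum' : ∑ i, ∑ j, (eTilde ebar i' i j + fbar i j) = 1 := by
    have : ∑ i, ∑ j, (eTilde ebar i' i j + fbar i j)
        = (∑ i, ∑ j, (ebar i j + fbar i j))
          + ∑ i, (eTilde ebar i' i i - ebar i i) := by
      rw [← Finset.sum_add_distrib]
      apply Finset.sum_congr rfl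
      intro i _
      rw [Finset.sum_add_distrib, Finset.sum_add_distrib, hrow i]
      ring
    rw [this, hsum, Finset.sum_sub_distrib, hdsum]
    ring
  have hcolsum : ∀ i : Fin r,
      ∑ k ∈ Finset.univ.filter (fun k => k ≠ i), np.mu k i * eTilde ebar i' k i
      = ∑ k ∈ Finset.univ.filter (fun k => k ≠ i), np.mu k i * ebar k i := by
    intro i
    apply Finset.sum_congr rfl
    intro k hk
    rw [hoff k i (Finset.mem_filter.mp hk).2]
  have hrowsum : ∀ i : Fin r,
      ∑ j ∈ Finset.univ.filter (fun j => j ≠ i), np.mu i j * eTilde ebar i' i j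
      = ∑ j ∈ Finset.univ.filter (fun j => j ≠ i), np.mu i j * ebar i j := by
    intro i
    apply Finset.sum_congr rfl
    intro j hj
    rw [hoff i j (Ne.symm (Finset.mem_filter.mp hj).2)]
  refine ⟨⟨h1, ?_, ?_, ?_, ?_, ⟨he01', hf01, hsum'⟩, h7⟩, ?_, rfl, hopt⟩
  · intro i j hij; rw [hoff i j hij]; exact h2 i j hij
  · intro i; rw [hcolsum i]; exact h3 i
  · intro i; rw [hcolsum i]; exact h4 i
  · intro i; rw [hcolsum i, hrowsum i]; exact h5 i
  · intro i
    by_cases hii : i = i'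
    · subst hii; rw [hi']; ring
    · simp [eTilde, hii]
end

section
/- There exists an r×r matrix π with nonnegative entries such that Σ_{i,j} π_{ij} = 1 and, for all 1 ≤ i,j ≤ r, P_{ij} · Σ_{k=1}^r π_{ki} μ_{ki} = μ_{ij} π_{ij}. (These are the flow-balance equations of a continuous-time Markov chain on the finite set {1,…,r}² whose only transitions are from (k,i) to (i,k) at rate μ_{ki} P_{ik}.) -/
/-!
Since `P 1 = 1`, the matrix `P - 1` is singular, so `P` has a nonzero left fixed vector `v`. The
triangle inequality gives `|v| ≤ |v| P` entrywise, and both sides have the same total mass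
because `P` is row-stochastic, hence `w = |v|` is a nonnegative stationary vector. Then
`π_{ij} ∝ w_i P_{ij} / μ_{ij}` works: the flow `Σ_k π_{ki} μ_{ki}` into `i` is proportional to
`(w P)_i = w_i`, so both sides of the balance equation are proportional to `w_i P_{ij}`.
-/

open Finset

open Matrix

namespace Matrix

variable {n : Type*} [Fintype n] [DecidableEq n]

theorem exists_ne_zero_vecMul_eq_self {A : Type*} [CommRing A] [IsDomain A] {M : Matrix n n A}
    {x : n → A} (hx : x ≠ 0) (hMx : M *ᵥ x = x) : ∃ v ≠ 0, v ᵥ* M = v := by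
  have hdet : (M - 1).det = 0 :=
    exists_mulVec_eq_zero_iff.1 ⟨x, hx, by rw [sub_mulVec, one_mulVec, hMx, sub_self]⟩
  obtain ⟨v, hv, hvM⟩ := exists_vecMul_eq_zero_iff.2 hdet
  exact ⟨v, hv, by rwa [vecMul_sub, vecMul_one, sub_eq_zero] at hvM⟩

variable {R : Type*} [Field R] [LinearOrder R] [IsStrictOrderedRing R] {M : Matrix n n R}

lemma sum_vecMul_of_mem_rowStochastic (hM : M ∈ rowStochastic R n) (x : n → R) :
    ∑ i, (x ᵥ* M) i = ∑ i, x i := by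
  rw [← mulVec_transpose]
  exact sum_mulVec_of_mem_colStochastic (transpose_mem_colStochastic_iff_mem_rowStochastic.2 hM)

lemma abs_vecMul_eq_self_of_mem_rowStochastic (hM : M ∈ rowStochastic R n) {v : n → R}
    (hv : v ᵥ* M = v) : |v| ᵥ* M = |v| := by
  have hle : ∀ j, |v| j ≤ (|v| ᵥ* M) j := fun j =>
    calc |v| j = |∑ i, v i * M i j| := congrArg (|·|) (congrFun hv j).symm
      _ ≤ ∑ i, |v i * M i j| := abs_sum_le_sum_abs _ _
      _ = (|v| ᵥ* M) j := by
        simp only [abs_mul, abs_of_nonneg (hM.1 _ _)]; rfl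
  have hsum := sum_vecMul_of_mem_rowStochastic hM |v|
  funext j
  exact ((sum_eq_sum_iff_of_le fun i _ => hle i).1 hsum.symm j (mem_univ j)).symm

theorem exists_stationary_of_mem_rowStochastic [Nonempty n] (hM : M ∈ rowStochastic R n) :
    ∃ w : n → R, 0 ≤ w ∧ ∑ i, w i = 1 ∧ w ᵥ* M = w := by
  obtain ⟨v, hv, hvM⟩ := exists_ne_zero_vecMul_eq_self one_ne_zero hM.2
  have hpos : 0 < ∑ i, |v| i := by
    obtain ⟨i, hi⟩ := Function.ne_iff.1 hv
    exact sum_pos' (fun j _ => abs_nonneg (v j)) ⟨i, mem_univ i, abs_pos.2 hi⟩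
  refine ⟨(∑ i, |v| i)⁻¹ • |v|, smul_nonneg (inv_nonneg.2 hpos.le) (abs_nonneg v), ?_, ?_⟩
  · simp only [Pi.smul_apply, smul_eq_mul, ← mul_sum, inv_mul_cancel₀ hpos.ne']
  · rw [smul_vecMul, abs_vecMul_eq_self_of_mem_rowStochastic hM hvM]

theorem exists_flow_balance_of_mem_rowStochastic [Nonempty n] (hM : M ∈ rowStochastic R n)
    {μ : Matrix n n R} (hμ : ∀ i j, 0 < μ i j) :
    ∃ π : Matrix n n R, (∀ i j, 0 ≤ π i j) ∧ ∑ i, ∑ j, π i j = 1 ∧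
      ∀ i j, M i j * ∑ k, π k i * μ k i = μ i j * π i j := by
  obtain ⟨w, hw0, hw1, hwM⟩ := exists_stationary_of_mem_rowStochastic hM
  set x : Matrix n n R := of fun i j => w i * M i j / μ i j
  have hx0 : ∀ i j, 0 ≤ x i j := fun i j => div_nonneg (mul_nonneg (hw0 i) (hM.1 i j)) (hμ i j).le
  have hxμ : ∀ i j, x i j * μ i j = w i * M i j := fun i j => div_mul_cancel₀ _ (hμ i j).ne'
  have hinflow : ∀ i, ∑ k, x k i * μ k i = w i := fun i => by
    simp only [hxμ]
    exact congrFun hwM i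
  have hZ : 0 < ∑ i, ∑ j, x i j := by
    refine (sum_nonneg fun i _ => sum_nonneg fun j _ => hx0 i j).lt_of_ne' fun h => ?_
    have hrow : ∀ i, ∑ j, x i j = 0 := fun i =>
      (sum_eq_zero_iff_of_nonneg fun i _ => sum_nonneg fun j _ => hx0 i j).1 h i (mem_univ i)
    have hx : ∀ i j, x i j = 0 := fun i j =>
      (sum_eq_zero_iff_of_nonneg fun j _ => hx0 i j).1 (hrow i) j (mem_univ j)
    simp [← hinflow, hx] at hw1
  refine ⟨(∑ i, ∑ j, x i j)⁻¹ • x, fun i j => mul_nonneg (inv_nonneg.2 hZ.le) (hx0 i j), ?_,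
    fun i j => ?_⟩
  · simp only [smul_apply, smul_eq_mul, ← mul_sum, inv_mul_cancel₀ hZ.ne']
  · simp only [smul_apply, smul_eq_mul, mul_assoc, ← mul_sum, hinflow]
    rw [mul_left_comm (μ i j), mul_comm (μ i j), hxμ]
    ring

end Matrix

/-- There exists a nonnegative matrix `π` summing to one that satisfies the
flow-balance equations `P_{ij} Σ_k π_{ki} μ_{ki} = μ_{ij} π_{ij}` of the
continuous-time Markov chain on `{1,…,r}²` whose only transitions are from
`(k,i)` to `(i,k)` at rate `μ_{ki} P_{ik}`. -/
theorem stmt_6 {r : ℕ} (hr : 1 ≤ r) (mu P : Mat r)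
    (hmu : ∀ i j, 0 < mu i j)
    (hP : ∀ i j, 0 ≤ P i j) (hProw : ∀ i, ∑ j, P i j = 1) :
    ∃ pi : Mat r, (∀ i j, 0 ≤ pi i j) ∧ (∑ i, ∑ j, pi i j) = 1 ∧
      ∀ i j, P i j * (∑ k, pi k i * mu k i) = mu i j * pi i j := by
  have : Nonempty (Fin r) := ⟨⟨0, hr⟩⟩
  exact exists_flow_balance_of_mem_rowStochastic (M := of P)
    (mem_rowStochastic_iff_sum.2 ⟨hP, hProw⟩) hmu
end

section
/- Let Q be a routing matrix with Q_{ii} > 0 for all i, and assume P_{ij} > 0 for all i,j. Suppose (ē, f̄, ā) and (ē', f̄', ā') both solve the system: λ_i P_{ij} ā_i = μ_{ij} f̄_{ij} for all i,j; μ_{ij} ē_{ij} = Q_{ij} Σ_k μ_{ki} f̄_{ki} for all i ≠ j; λ_i ā_i = Σ_{k≠i} μ_{ki} ē_{ki} + Q_{ii} Σ_k μ_{ki} f̄_{ki} for all i; (1 − ā_i) ē_{ii} = 0 for all i; (ē, f̄) ∈ 𝒯; ā ∈ [0,1]^r. Then ā = ā', f̄ = f̄', ē_{ij} = ē'_{ij}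 for all i ≠ j, and ē_{ii} = ē'_{ii} = 0 for every i with ā_i < 1; consequently the quantity m̄ = Σ_{i : ā_i = 1} ē_{ii} is the same for all solutions. That is, solutions can differ only in the components ē_{ii} with ā_i = 1. -/
open Finset Filter Topology MeasureTheory

/-- The equilibrium system of equations (16a)–(16e) associated with the routing
matrix `Q`. -/
def EqSys {r : ℕ} (np : NetParams r) (Q ebar fbar : Mat r)
    (abar : Fin r → ℝ) : Prop :=
  (∀ i j, np.lam i * np.P i j * abar i = np.mu i j * fbar i j) ∧
  (∀ i j, i ≠ j → np.mu i j * ebar i j = Q i j * ∑ k, np.mu k i * fbar k i) ∧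
  (∀ i, np.lam i * abar i =
    (∑ k ∈ Finset.univ.filter (fun k => k ≠ i), np.mu k i * ebar k i)
      + Q i i * ∑ k, np.mu k i * fbar k i) ∧
  (∀ i, (1 - abar i) * ebar i i = 0) ∧
  MemT ebar fbar ∧
  (∀ i, 0 ≤ abar i ∧ abar i ≤ 1)

lemma aux_eigen {r : ℕ} (hr : 1 ≤ r) (np : NetParams r)
    (hP : ∀ i j, 0 < np.P i j)
    (Q : Mat r) (hQ : IsRouting Q) (hQd : ∀ i, 0 < Q i i)
    (e f : Mat r) (a : Fin r → ℝ) (h : EqSys np Q e f a) :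
    (∀ i, np.lam i * a i
        = ∑ m, (∑ k, np.P m k * Q k i) * (np.lam m * a m)) ∧
    (∀ i, 0 < a i) := by
  obtain ⟨h1, h2, h3, h4, h5, h6⟩ := h
  have t_eq : ∀ i, (∑ k, np.mu k i * f k i)
      = ∑ m, np.P m i * (np.lam m * a m) := by
    intro i
    refine Finset.sum_congr rfl fun k _ => ?_
    rw [← h1 k i]; ring
  have key : ∀ i, np.lam i * a i
      = ∑ k, Q k i * ∑ m, np.P m k * (np.lam m * a m) := by
    intro i
    have e1 : ∑ k ∈ Finset.univ.filter (fun k => k ≠ i), np.mu k i * e k i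
        = ∑ k ∈ Finset.univ.filter (fun k => k ≠ i),
            Q k i * ∑ m, np.P m k * (np.lam m * a m) := by
      refine Finset.sum_congr rfl fun k hk => ?_
      have hk' : k ≠ i := (Finset.mem_filter.mp hk).2
      rw [h2 k i hk', t_eq k]
    rw [h3 i, e1, t_eq i, Finset.filter_ne']
    exact (Finset.sum_erase_add Finset.univ (fun k => Q k i * ∑ m, np.P m k * (np.lam m * a m)) (Finset.mem_univ i))
  have eigen : ∀ i, np.lam i * a i
      = ∑ m, (∑ k, np.P m k * Q k i) * (np.lam m * a m) := by
    intro i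
    rw [key i]
    simp_rw [Finset.mul_sum]
    rw [Finset.sum_comm]
    refine Finset.sum_congr rfl fun m _ => ?_
    simp_rw [Finset.sum_mul]
    exact Finset.sum_congr rfl fun k _ => by ring
  have hA : ∀ m i, 0 < ∑ k, np.P m k * Q k i := by
    intro m i
    refine lt_of_lt_of_le (mul_pos (hP m i) (hQd i)) ?_
    exact Finset.single_le_sum
      (f := fun k => np.P m k * Q k i)
      (fun k _ => mul_nonneg (hP m k).le (hQ.1 k i)) (Finset.mem_univ i)
  have hne : ∃ m, 0 < a m := by
    by_contra hcon
    push_neg at hcon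
    have ha0 : ∀ m, a m = 0 := fun m => le_antisymm (hcon m) (h6 m).1
    have hf0 : ∀ i j, f i j = 0 := by
      intro i j
      have := h1 i j
      rw [ha0 i, mul_zero] at this
      rcases mul_eq_zero.mp this.symm with h0 | h0
      · exact absurd h0 (ne_of_gt (np.mu_pos i j))
      · exact h0
    have he0 : ∀ i j, e i j = 0 := by
      intro i j
      by_cases hij : i = j
      · subst hij
        have := h4 i
        rw [ha0 i] at this
        simpa using this
      · have := h2 i j hij
        simp only [hf0, mul_zero, Finset.sum_const_zero] at this
        rcases mul_eq_zero.mp this with h0 | h0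
        · exact absurd h0 (ne_of_gt (np.mu_pos i j))
        · exact h0
    have := h5.2.2
    simp [hf0, he0] at this
  obtain ⟨m0, hm0⟩ := hne
  have hx_pos : ∀ i, 0 < np.lam i * a i := by
    intro i
    rw [eigen i]
    refine Finset.sum_pos' (fun m _ => mul_nonneg (hA m i).le
      (mul_nonneg (np.lam_pos m).le (h6 m).1)) ?_
    exact ⟨m0, Finset.mem_univ m0,
      mul_pos (hA m0 i) (mul_pos (np.lam_pos m0) hm0)⟩
  refine ⟨eigen, fun i => ?_⟩
  by_contra hna
  push_neg at hna
  nlinarith [hx_pos i, np.lam_pos i]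

/-- Lemma 3 (uniqueness part): two solutions of the equilibrium system agree in
`ā`, `f̄`, the off-diagonal entries of `ē`, and have `ē_{ii} = 0` whenever
`ā_i < 1`; in particular the mass `m̄ = Σ_{i : ā_i = 1} ē_{ii}` is the same for
all solutions.  Solutions can differ only in the entries `ē_{ii}` with `ā_i = 1`. -/
theorem stmt_8 {r : ℕ} (hr : 1 ≤ r) (np : NetParams r)
    (hP : ∀ i j, 0 < np.P i j)
    (Q : Mat r) (hQ : IsRouting Q) (hQd : ∀ i, 0 < Q i i)
    (ebar fbar ebar' fbar' : Mat r) (abar abar' : Fin r → ℝ)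
    (h : EqSys np Q ebar fbar abar) (h' : EqSys np Q ebar' fbar' abar') :
    (∀ i, abar i = abar' i) ∧
    (∀ i j, fbar i j = fbar' i j) ∧
    (∀ i j, i ≠ j → ebar i j = ebar' i j) ∧
    (∀ i, abar i < 1 → ebar i i = 0 ∧ ebar' i i = 0) ∧
    (∑ i ∈ Finset.univ.filter (fun i => abar i = 1), ebar i i)
      = ∑ i ∈ Finset.univ.filter (fun i => abar' i = 1), ebar' i i := by
  haveI : Nonempty (Fin r) := ⟨⟨0, hr⟩⟩
  obtain ⟨eigen, hapos⟩ := aux_eigen hr np hP Q hQ hQd ebar fbar abar h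
  obtain ⟨eigen', hapos'⟩ := aux_eigen hr np hP Q hQ hQd ebar' fbar' abar' h'
  obtain ⟨h1, h2, h3, h4, h5, h6⟩ := h
  obtain ⟨h1', h2', h3', h4', h5', h6'⟩ := h'
  have hA : ∀ m i, 0 < ∑ k, np.P m k * Q k i := by
    intro m i
    refine lt_of_lt_of_le (mul_pos (hP m i) (hQd i)) ?_
    exact Finset.single_le_sum
      (f := fun k => np.P m k * Q k i)
      (fun k _ => mul_nonneg (hP m k).le (hQ.1 k i)) (Finset.mem_univ i)
  have hx_pos : ∀ i, 0 < np.lam i * abar i :=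
    fun i => mul_pos (np.lam_pos i) (hapos i)
  have hx'_pos : ∀ i, 0 < np.lam i * abar' i :=
    fun i => mul_pos (np.lam_pos i) (hapos' i)
  -- the minimal ratio
  obtain ⟨i0, -, hi0⟩ := Finset.exists_min_image (Finset.univ : Finset (Fin r))
    (fun i => (np.lam i * abar i) / (np.lam i * abar' i)) Finset.univ_nonempty
  set c : ℝ := (np.lam i0 * abar i0) / (np.lam i0 * abar' i0) with hc_def
  have hc_pos : 0 < c := div_pos (hx_pos i0) (hx'_pos i0)
  have hy_nonneg : ∀ m, 0 ≤ np.lam m * abar m - c * (np.lam m * abar' m) := by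
    intro m
    have := hi0 m (Finset.mem_univ m)
    rw [le_div_iff₀ (hx'_pos m)] at this
    linarith
  have hy_eigen : ∀ i, np.lam i * abar i - c * (np.lam i * abar' i)
      = ∑ m, (∑ k, np.P m k * Q k i)
          * (np.lam m * abar m - c * (np.lam m * abar' m)) := by
    intro i
    have e1 := eigen i
    have e2 := eigen' i
    calc np.lam i * abar i - c * (np.lam i * abar' i)
        = (∑ m, (∑ k, np.P m k * Q k i) * (np.lam m * abar m))
            - c * ∑ m, (∑ k, np.P m k * Q k i) * (np.lam m * abar' m) := by
          rw [← e1, ← e2]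
      _ = ∑ m, (∑ k, np.P m k * Q k i)
            * (np.lam m * abar m - c * (np.lam m * abar' m)) := by
          rw [Finset.mul_sum, ← Finset.sum_sub_distrib]
          exact Finset.sum_congr rfl fun m _ => by ring
  have hzero : ∀ m, np.lam m * abar m = c * (np.lam m * abar' m) := by
    have h0 : np.lam i0 * abar i0 - c * (np.lam i0 * abar' i0) = 0 := by
      rw [hc_def, div_mul_cancel₀ _ (ne_of_gt (hx'_pos i0)), sub_self]
    have hsum := hy_eigen i0
    rw [h0] at hsum
    have hall := (Finset.sum_eq_zero_iff_of_nonneg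
      (fun m _ => mul_nonneg (hA m i0).le (hy_nonneg m))).mp hsum.symm
    intro m
    have := hall m (Finset.mem_univ m)
    rcases mul_eq_zero.mp this with h0' | h0'
    · exact absurd h0' (ne_of_gt (hA m i0))
    · linarith
  have ha : ∀ m, abar m = c * abar' m := by
    intro m
    have := hzero m
    have hl := ne_of_gt (np.lam_pos m)
    have : np.lam m * abar m = np.lam m * (c * abar' m) := by linarith [hzero m]
    exact mul_left_cancel₀ hl this
  -- f relation
  have hfc : ∀ i j, fbar i j = c * fbar' i j := by
    intro i j
    have hmu := ne_of_gt (np.mu_pos i j)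
    refine mul_left_cancel₀ hmu ?_
    rw [← h1 i j, ha i]
    linear_combination c * (h1' i j)
  -- off-diagonal e relation
  have hec : ∀ i j, i ≠ j → ebar i j = c * ebar' i j := by
    intro i j hij
    have hmu := ne_of_gt (np.mu_pos i j)
    refine mul_left_cancel₀ hmu ?_
    rw [h2 i j hij]
    have hs : (∑ k, np.mu k i * fbar k i) = c * ∑ k, np.mu k i * fbar' k i := by
      rw [Finset.mul_sum]
      exact Finset.sum_congr rfl fun k _ => by rw [hfc k i]; ring
    rw [hs]
    linear_combination (-c) * (h2' i j hij)
  -- sum decomposition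
  have hsplit : ∀ (e f : Mat r), (∑ i, ∑ j, (e i j + f i j))
      = (∑ i, e i i)
        + ∑ i, ((∑ j ∈ Finset.univ.erase i, e i j) + ∑ j, f i j) := by
    intro e f
    rw [← Finset.sum_add_distrib]
    refine Finset.sum_congr rfl fun i _ => ?_
    rw [Finset.sum_add_distrib]
    have : ∑ j, e i j = e i i + ∑ j ∈ Finset.univ.erase i, e i j := by
      rw [add_comm]
      exact (Finset.sum_erase_add Finset.univ (fun j => e i j)
        (Finset.mem_univ i)).symm
    rw [this]
    ring
  set S : ℝ := ∑ i, ((∑ j ∈ Finset.univ.erase i, ebar i j) + ∑ j, fbar i j)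
    with hS_def
  set S' : ℝ := ∑ i, ((∑ j ∈ Finset.univ.erase i, ebar' i j) + ∑ j, fbar' i j)
    with hS'_def
  set E : ℝ := ∑ i, ebar i i with hE_def
  set E' : ℝ := ∑ i, ebar' i i with hE'_def
  have hES : E + S = 1 := by
    rw [hE_def, hS_def, ← hsplit ebar fbar]
    exact h5.2.2
  have hES' : E' + S' = 1 := by
    rw [hE'_def, hS'_def, ← hsplit ebar' fbar']
    exact h5'.2.2
  have hSc : S = c * S' := by
    rw [hS_def, hS'_def, Finset.mul_sum]
    refine Finset.sum_congr rfl fun i _ => ?_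
    rw [mul_add, Finset.mul_sum, Finset.mul_sum]
    congr 1
    · refine Finset.sum_congr rfl fun j hj => ?_
      exact hec i j (fun hij => (Finset.mem_erase.mp hj).1 hij.symm)
    · exact Finset.sum_congr rfl fun j _ => hfc i j
  have hE_nonneg : 0 ≤ E :=
    Finset.sum_nonneg fun i _ => (h5.1 i i).1
  have hE'_nonneg : 0 ≤ E' :=
    Finset.sum_nonneg fun i _ => (h5'.1 i i).1
  have hf'pos : ∀ i j, 0 < fbar' i j := by
    intro i j
    have heq : fbar' i j = np.lam i * np.P i j * abar' i / np.mu i j := by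
      rw [eq_div_iff (ne_of_gt (np.mu_pos i j))]
      linarith [h1' i j]
    rw [heq]
    have := np.lam_pos i
    have := hP i j
    have := hapos' i
    have := np.mu_pos i j
    positivity
  have hfpos : ∀ i j, 0 < fbar i j := by
    intro i j
    have heq : fbar i j = np.lam i * np.P i j * abar i / np.mu i j := by
      rw [eq_div_iff (ne_of_gt (np.mu_pos i j))]
      linarith [h1 i j]
    rw [heq]
    have := np.lam_pos i
    have := hP i j
    have := hapos i
    have := np.mu_pos i j
    positivity
  have hS'pos : 0 < S' := by
    rw [hS'_def]
    refine Finset.sum_pos (fun i _ => ?_) Finset.univ_nonempty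
    refine add_pos_of_nonneg_of_pos
      (Finset.sum_nonneg fun j _ => (h5'.1 i j).1) ?_
    exact Finset.sum_pos (fun j _ => hf'pos i j) Finset.univ_nonempty
  -- c ≤ 1
  have hc_le : c ≤ 1 := by
    by_cases hE' : E' = 0
    · have hS'1 : S' = 1 := by linarith
      have hSeq : S = c := by rw [hSc, hS'1, mul_one]
      linarith
    · have hE'pos : 0 < E' := lt_of_le_of_ne hE'_nonneg (Ne.symm hE')
      obtain ⟨i, hi⟩ : ∃ i, 0 < ebar' i i := by
        by_contra hcon
        push_neg at hcon
        have : E' ≤ 0 := Finset.sum_nonpos fun i _ => hcon i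
        linarith
      have ha'1 : abar' i = 1 := by
        rcases mul_eq_zero.mp (h4' i) with h0 | h0
        · linarith
        · linarith
      have hai := ha i
      rw [ha'1, mul_one] at hai
      have := (h6 i).2
      linarith
  -- c ≥ 1
  have hc_ge : 1 ≤ c := by
    by_cases hE0 : E = 0
    · have hS1 : S = 1 := by linarith
      have : c * S' = 1 := by rw [← hSc, hS1]
      have hS'le : S' ≤ 1 := by linarith
      nlinarith
    · have hEpos : 0 < E := lt_of_le_of_ne hE_nonneg (Ne.symm hE0)
      obtain ⟨i, hi⟩ : ∃ i, 0 < ebar i i := by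
        by_contra hcon
        push_neg at hcon
        have : E ≤ 0 := Finset.sum_nonpos fun i _ => hcon i
        linarith
      have ha1 : abar i = 1 := by
        rcases mul_eq_zero.mp (h4 i) with h0 | h0
        · linarith
        · linarith
      have hai := ha i
      rw [ha1] at hai
      have h1le := (h6' i).2
      nlinarith
  have hc1 : c = 1 := le_antisymm hc_le hc_ge
  rw [hc1] at ha hfc hec hSc
  simp only [one_mul] at ha hfc hec hSc
  refine ⟨ha, hfc, hec, ?_, ?_⟩
  · intro i hlt
    have he : ebar i i = 0 := by
      rcases mul_eq_zero.mp (h4 i) with h0 | h0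
      · linarith
      · exact h0
    have he' : ebar' i i = 0 := by
      rcases mul_eq_zero.mp (h4' i) with h0 | h0
      · rw [← ha i] at h0; linarith
      · exact h0
    exact ⟨he, he'⟩
  · have hfil : (∑ i ∈ Finset.univ.filter (fun i => abar i = 1), ebar i i) = E := by
      rw [hE_def]
      refine Finset.sum_filter_of_ne fun i _ hne => ?_
      rcases mul_eq_zero.mp (h4 i) with h0 | h0
      · linarith
      · exact absurd h0 hne
    have hfil' : (∑ i ∈ Finset.univ.filter (fun i => abar' i = 1), ebar' i i) = E' := by
      rw [hE'_def]
      refine Finset.sum_filter_of_ne fun i _ hne => ?_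
      rcases mul_eq_zero.mp (h4' i) with h0 | h0
      · linarith
      · exact absurd h0 hne
    rw [hfil, hfil']
    linarith
end

section
/- Let (e, f, u) be a fluid model solution. Then each component u_i is 1-Lipschitz, i.e. |u_i(t) − u_i(s)| ≤ |t − s| for all s, t ≥ 0 and all i, and the functions e and f are Lipschitz continuous on [0,∞): there exists a constant L > 0 such that |e_{ij}(t) − e_{ij}(s)| ≤ L|t − s| and |f_{ij}(t) − f_{ij}(s)| ≤ L|t − s| for all i,j and all s, t ≥ 0. -/
open Finset Filter Topology MeasureTheory intervalIntegral

open scoped Classical in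
/-- The Lebesgue–Stieltjes measure associated with a non-decreasing `g : ℝ → ℝ`
(junk value `0` if `g` is not monotone). -/
noncomputable def lsMeasure (g : ℝ → ℝ) : Measure ℝ :=
  if h : Monotone g then h.stieltjesFunction.measure else 0

/-- A fluid model solution `(e, f, u)` for the ridesharing network with static
routing matrix `Q`.  All functions are defined on `ℝ`, but only their values
on `[0, ∞)` are relevant; `u` is extended by `0` on `(-∞, 0]`. -/
structure IsFluidSol {r : ℕ} (np : NetParams r) (Q : Mat r) (e f : ℝ → Mat r)
    (u : ℝ → Fin r → ℝ) : Prop where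
  cont_e : ∀ i j, ContinuousOn (fun t => e t i j) (Set.Ici 0)
  cont_f : ∀ i j, ContinuousOn (fun t => f t i j) (Set.Ici 0)
  mem_T : ∀ t, 0 ≤ t → MemT (e t) (f t)
  u_nonneg : ∀ t i, 0 ≤ u t i
  u_mono : ∀ i, Monotone fun t => u t i
  u_zero : ∀ i, ∀ t ≤ (0:ℝ), u t i = 0
  eq_f : ∀ i j, ∀ t, 0 ≤ t →
    f t i j = f 0 i j + np.lam i * np.P i j * (t - u t i)
      - np.mu i j * ∫ s in (0:ℝ)..t, f s i j
  eq_e_off : ∀ i j, i ≠ j → ∀ t, 0 ≤ t →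
    e t i j = e 0 i j - np.mu i j * (∫ s in (0:ℝ)..t, e s i j)
      + Q i j * ∑ k, np.mu k i * ∫ s in (0:ℝ)..t, f s k i
  eq_e_diag : ∀ i, ∀ t, 0 ≤ t →
    e t i i = e 0 i i - np.lam i * (t - u t i)
      + (∑ j ∈ Finset.univ.filter (fun j => j ≠ i), np.mu j i * ∫ s in (0:ℝ)..t, e s j i)
      + Q i i * ∑ j, np.mu j i * ∫ s in (0:ℝ)..t, f s j i
  compl : ∀ i, ∫⁻ s in Set.Ici (0:ℝ),
      ENNReal.ofReal (e s i i) ∂(lsMeasure fun t => u t i) = 0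

open scoped Classical in
/-- The equilibrium set ℰ associated to the routing matrix `Q`. -/
noncomputable def eqSet {r : ℕ} (np : NetParams r) (Q : Mat r) : Set (Mat r × Mat r) :=
  {p | MemT p.1 p.2 ∧ ∃ a : Fin r → ℝ, (∀ i, 0 ≤ a i ∧ a i ≤ 1) ∧
    (∀ i j, np.lam i * np.P i j * a i = np.mu i j * p.2 i j) ∧
    (∀ i j, i ≠ j → np.mu i j * p.1 i j = Q i j * ∑ k, np.mu k i * p.2 k i) ∧
    (∀ i, np.lam i * a i =
      (∑ k ∈ Finset.univ.filter (fun k => k ≠ i), np.mu k i * p.1 k i)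
        + Q i i * ∑ k, np.mu k i * p.2 k i) ∧
    (∀ i, (1 - a i) * p.1 i i = 0)}

/-!
Solving the `f_{ij}`-equation for `u_i` (for some `j` with `P_{ij} ≠ 0`) shows that `u_i` is
continuous, so its Lebesgue–Stieltjes measure gives `(a, b]` the mass `u_i(b) - u_i(a)`. By
complementarity `u_i` is therefore constant on every interval on which `e_{ii} > 0`. At a zero `t`
of `e_{ii}`, the diagonal equation gives
`λ_i ((t - u_i(t)) - (s - u_i(s))) = e_{ii}(s) + (increase of the inflow terms) ≥ 0`.
Splitting `[s, t]` at the last zero of `e_{ii}` shows that `t ↦ t - u_i(t)` is nondecreasing; as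
`u_i` is nondecreasing too and the two sum to `t`, both are 1-Lipschitz. Every `e_{ij}` and `f_{ij}`
is then an affine combination of the functions `t - u_k(t)` and of primitives of functions with
values in `[0, 1]`, hence Lipschitz.
-/

open scoped NNReal

theorem LipschitzOnWith.congr {α β : Type*} [PseudoEMetricSpace α] [PseudoEMetricSpace β]
    {K : ℝ≥0} {f g : α → β} {s : Set α} (hg : LipschitzOnWith K g s) (hfg : Set.EqOn f g s) :
    LipschitzOnWith K f s := fun x hx y hy => by
  rw [hfg hx, hfg hy]; exact hg hx hy

theorem LipschitzOnWith.const_mul {α : Type*} [PseudoEMetricSpace α] {K : ℝ≥0} {f : α → ℝ}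
    {s : Set α} (hf : LipschitzOnWith K f s) (c : ℝ) :
    LipschitzOnWith (‖c‖₊ * K) (fun x => c * f x) s :=
  (lipschitzWith_smul c).comp_lipschitzOnWith hf

theorem LipschitzOnWith.sum {α ι : Type*} [PseudoEMetricSpace α] {s : Set α} {t : Finset ι}
    {K : ι → ℝ≥0} {f : ι → α → ℝ} (hf : ∀ k ∈ t, LipschitzOnWith (K k) (f k) s) :
    LipschitzOnWith (∑ k ∈ t, K k) (fun x => ∑ k ∈ t, f k x) s := by
  classical
  induction t using Finset.induction_on with
  | empty => simp
  | insert k t hk ih =>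
    simp only [Finset.sum_insert hk]
    exact (hf k (Finset.mem_insert_self k t)).add
      (ih fun k' hk' => hf k' (Finset.mem_insert_of_mem hk'))

theorem LipschitzOnWith.exists_forall_of_finite {α β ι : Type*} [PseudoEMetricSpace α]
    [PseudoEMetricSpace β] [Fintype ι] {s : Set α} {f : ι → α → β}
    (hf : ∀ k, ∃ K, LipschitzOnWith K (f k) s) : ∃ K, ∀ k, LipschitzOnWith K (f k) s := by
  choose K hK using hf
  exact ⟨Finset.univ.sup K, fun k => (hK k).weaken (Finset.le_sup (Finset.mem_univ k))⟩

theorem LipschitzOnWith.abs_sub_le {K : ℝ≥0} {g : ℝ → ℝ} {s : Set ℝ} (hg : LipschitzOnWith K g s)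
    {x y : ℝ} (hx : x ∈ s) (hy : y ∈ s) : |g x - g y| ≤ K * |x - y| := by
  simpa only [Real.dist_eq] using hg.dist_le_mul x hx y hy

theorem lipschitzOnWith_one_of_monotoneOn_of_monotoneOn_sub {u : ℝ → ℝ} {s : Set ℝ}
    (hu : MonotoneOn u s) (hg : MonotoneOn (fun t => t - u t) s) : LipschitzOnWith 1 u s := by
  refine LipschitzOnWith.of_le_add fun x hx y hy => ?_
  rcases le_total x y with hxy | hyx
  · linarith [hu hx hy hxy, dist_nonneg (x := x) (y := y)]
  · have := hg hy hx hyx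
    rw [Real.dist_eq, abs_of_nonneg (sub_nonneg.2 hyx)]
    linarith

theorem lipschitzOnWith_primitive {h : ℝ → ℝ} {a : ℝ} {C : ℝ≥0} (hc : ContinuousOn h (Set.Ici a))
    (hb : ∀ x ∈ Set.Ici a, ‖h x‖ ≤ C) :
    LipschitzOnWith C (fun t => ∫ x in a..t, h x) (Set.Ici a) := by
  have hint : ∀ t ∈ Set.Ici a, IntervalIntegrable h MeasureSpace.volume a t := fun t ht =>
    (hc.mono (Set.ordConnected_Ici.uIcc_subset Set.self_mem_Ici ht)).intervalIntegrable
  refine LipschitzOnWith.of_dist_le_mul fun x hx y hy => ?_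
  rw [dist_eq_norm, integral_interval_sub_left (hint x hx) (hint y hy), Real.dist_eq]
  exact intervalIntegral.norm_integral_le_of_norm_le_const fun z hz =>
    hb z (Set.uIoc_subset_uIcc.trans (Set.ordConnected_Ici.uIcc_subset hy hx) hz)

theorem monotoneOn_primitive {h : ℝ → ℝ} {a : ℝ} (hc : ContinuousOn h (Set.Ici a))
    (hnn : ∀ x ∈ Set.Ici a, 0 ≤ h x) :
    MonotoneOn (fun t => ∫ x in a..t, h x) (Set.Ici a) := fun _ hx _ _ hxy =>
  integral_mono_interval le_rfl hx hxy
    ((ae_restrict_iff' measurableSet_Ioc).2 (Eventually.of_forall fun z hz => hnn z hz.1.le))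
    (hc.mono (Set.ordConnected_Ici.uIcc_subset Set.self_mem_Ici
      (Set.mem_Ici.2 (hx.trans hxy)))).intervalIntegrable

theorem measure_eq_zero_of_setLIntegral_ofReal_eq_zero {α : Type*} [MeasurableSpace α]
    [TopologicalSpace α] [OpensMeasurableSpace α] {μ : Measure α} {h : α → ℝ} {T S : Set α}
    (hT : MeasurableSet T) (hc : ContinuousOn h T)
    (hzero : ∫⁻ x in T, ENNReal.ofReal (h x) ∂μ = 0) (hST : S ⊆ T) (hpos : ∀ x ∈ S, 0 < h x) :
    μ S = 0 := by
  rw [setLIntegral_eq_zero_iff' hT (hc.aemeasurable hT).ennreal_ofReal] at hzero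
  rw [measure_eq_zero_iff_ae_notMem]
  filter_upwards [hzero] with x hx hxS
  exact (ENNReal.ofReal_pos.2 (hpos x hxS)).ne' (hx (hST hxS))

theorem lsMeasure_Ioc {g : ℝ → ℝ} {c a b : ℝ} (hg : Monotone g) (hc : ContinuousOn g (Set.Ici c))
    (hca : c ≤ a) (hab : a ≤ b) : lsMeasure g (Set.Ioc a b) = ENNReal.ofReal (g b - g a) := by
  have hright : ∀ x, c ≤ x → Function.rightLim g x = g x := fun x hx =>
    ((hc x hx).mono (Set.Ici_subset_Ici.2 hx)).rightLim_eq
  rw [lsMeasure, dif_pos hg, StieltjesFunction.measure_Ioc, hg.stieltjesFunction_eq,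
    hg.stieltjesFunction_eq, hright a hca, hright b (hca.trans hab)]

theorem monotoneOn_sub_of_const_off_zeros {u e : ℝ → ℝ} {c : ℝ} (he : ContinuousOn e (Set.Ici c))
    (hzero : ∀ s t, c ≤ s → s ≤ t → e t = 0 → s - u s ≤ t - u t)
    (hconst : ∀ s t, c ≤ s → s ≤ t → (∀ x ∈ Set.Ioc s t, e x ≠ 0) → u t = u s) :
    MonotoneOn (fun t => t - u t) (Set.Ici c) := by
  intro s hs t _ hst
  set Z := Set.Icc s t ∩ e ⁻¹' {0}
  by_cases hZ : Z.Nonempty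
  · have hZc : IsCompact Z := isCompact_Icc.of_isClosed_subset
      ((he.mono (Set.Icc_subset_Ici_iff hst |>.2 hs)).preimage_isClosed_of_isClosed isClosed_Icc
        isClosed_singleton) Set.inter_subset_left
    obtain ⟨b, ⟨⟨hsb, hbt⟩, heb⟩, hbmax⟩ := hZc.exists_isGreatest hZ
    have hub : u t = u b := hconst b t (le_trans hs hsb) hbt fun x hx hex =>
      (hbmax ⟨⟨hsb.trans hx.1.le, hx.2⟩, hex⟩).not_gt hx.1
    have := hzero s b hs hsb heb
    show s - u s ≤ t - u t
    rw [hub]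
    linarith
  · have := hconst s t hs hst fun x hx hex => hZ ⟨x, ⟨hx.1.le, hx.2⟩, hex⟩
    show s - u s ≤ t - u t
    linarith

theorem NetParams.exists_P_ne_zero {r : ℕ} (np : NetParams r) (i : Fin r) : ∃ j, np.P i j ≠ 0 :=
  (Finset.exists_ne_zero_of_sum_ne_zero (by rw [np.P_rowsum i]; exact one_ne_zero)).imp
    fun _ hj => hj.2

namespace IsFluidSol

variable {r : ℕ} {np : NetParams r} {Q : Mat r} {e f : ℝ → Mat r} {u : ℝ → Fin r → ℝ}

theorem lipschitzOnWith_integral_e (hsol : IsFluidSol np Q e f u) (i j : Fin r) :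
    LipschitzOnWith 1 (fun t => ∫ s in (0:ℝ)..t, e s i j) (Set.Ici 0) :=
  lipschitzOnWith_primitive (hsol.cont_e i j) fun x hx => by
    obtain ⟨h0, h1⟩ := (hsol.mem_T x hx).1 i j
    rw [Real.norm_of_nonneg h0, NNReal.coe_one]
    exact h1

theorem lipschitzOnWith_integral_f (hsol : IsFluidSol np Q e f u) (i j : Fin r) :
    LipschitzOnWith 1 (fun t => ∫ s in (0:ℝ)..t, f s i j) (Set.Ici 0) :=
  lipschitzOnWith_primitive (hsol.cont_f i j) fun x hx => by
    obtain ⟨h0, h1⟩ := (hsol.mem_T x hx).2.1 i j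
    rw [Real.norm_of_nonneg h0, NNReal.coe_one]
    exact h1

theorem monotoneOn_integral_e (hsol : IsFluidSol np Q e f u) (i j : Fin r) :
    MonotoneOn (fun t => ∫ s in (0:ℝ)..t, e s i j) (Set.Ici 0) :=
  monotoneOn_primitive (hsol.cont_e i j) fun x hx => ((hsol.mem_T x hx).1 i j).1

theorem monotoneOn_integral_f (hsol : IsFluidSol np Q e f u) (i j : Fin r) :
    MonotoneOn (fun t => ∫ s in (0:ℝ)..t, f s i j) (Set.Ici 0) :=
  monotoneOn_primitive (hsol.cont_f i j) fun x hx => ((hsol.mem_T x hx).2.1 i j).1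

theorem continuousOn_u (hsol : IsFluidSol np Q e f u) (i : Fin r) :
    ContinuousOn (fun t => u t i) (Set.Ici 0) := by
  obtain ⟨j, hj⟩ := np.exists_P_ne_zero i
  have hl := (np.lam_pos i).ne'
  have hf := hsol.cont_f i j
  have hI := (hsol.lipschitzOnWith_integral_f i j).continuousOn
  refine ContinuousOn.congr (f := fun t => t - (f t i j - f 0 i j
    + np.mu i j * ∫ s in (0:ℝ)..t, f s i j) / (np.lam i * np.P i j)) (by fun_prop) fun t ht => ?_
  simp only [hsol.eq_f i j t ht]
  field_simp
  ring

theorem u_eq_of_forall_ne_zero (hsol : IsFluidSol np Q e f u) (i : Fin r) {s t : ℝ}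
    (hs : 0 ≤ s) (hst : s ≤ t) (hne : ∀ x ∈ Set.Ioc s t, e x i i ≠ 0) : u t i = u s i := by
  have hμ : lsMeasure (fun t => u t i) (Set.Ioc s t) = 0 :=
    measure_eq_zero_of_setLIntegral_ofReal_eq_zero measurableSet_Ici (hsol.cont_e i i)
      (hsol.compl i) (fun x hx => hs.trans hx.1.le) fun x hx =>
        (((hsol.mem_T x (hs.trans hx.1.le)).1 i i).1).lt_of_ne (hne x hx).symm
  rw [lsMeasure_Ioc (hsol.u_mono i) (hsol.continuousOn_u i) hs hst, ENNReal.ofReal_eq_zero] at hμ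
  exact le_antisymm (by linarith) (hsol.u_mono i hst)

theorem sub_u_le_of_diag_eq_zero (hsol : IsFluidSol np Q e f u) {i : Fin r} (hQ : 0 ≤ Q i i)
    {s t : ℝ} (hs : 0 ≤ s) (hst : s ≤ t) (het : e t i i = 0) : s - u s i ≤ t - u t i := by
  have ht : 0 ≤ t := hs.trans hst
  have hA : (∑ j ∈ Finset.univ.filter (fun j => j ≠ i), np.mu j i * ∫ x in (0:ℝ)..s, e x j i)
      ≤ ∑ j ∈ Finset.univ.filter (fun j => j ≠ i), np.mu j i * ∫ x in (0:ℝ)..t, e x j i :=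
    Finset.sum_le_sum fun j _ =>
      mul_le_mul_of_nonneg_left (hsol.monotoneOn_integral_e j i hs ht hst) (np.mu_pos j i).le
  have hB : (∑ j, np.mu j i * ∫ x in (0:ℝ)..s, f x j i)
      ≤ ∑ j, np.mu j i * ∫ x in (0:ℝ)..t, f x j i :=
    Finset.sum_le_sum fun j _ =>
      mul_le_mul_of_nonneg_left (hsol.monotoneOn_integral_f j i hs ht hst) (np.mu_pos j i).le
  have hes : 0 ≤ e s i i := ((hsol.mem_T s hs).1 i i).1
  have hes_eq := hsol.eq_e_diag i s hs
  have het_eq := hsol.eq_e_diag i t ht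
  have := mul_le_mul_of_nonneg_left hB hQ
  refine le_of_mul_le_mul_left ?_ (np.lam_pos i)
  linarith

theorem monotoneOn_sub_u (hsol : IsFluidSol np Q e f u) {i : Fin r} (hQ : 0 ≤ Q i i) :
    MonotoneOn (fun t => t - u t i) (Set.Ici 0) :=
  monotoneOn_sub_of_const_off_zeros (hsol.cont_e i i)
    (fun _ _ hs hst het => hsol.sub_u_le_of_diag_eq_zero hQ hs hst het)
    (fun _ _ hs hst hne => hsol.u_eq_of_forall_ne_zero i hs hst hne)

theorem lipschitzOnWith_u (hsol : IsFluidSol np Q e f u) {i : Fin r} (hQ : 0 ≤ Q i i) :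
    LipschitzOnWith 1 (fun t => u t i) (Set.Ici 0) :=
  lipschitzOnWith_one_of_monotoneOn_of_monotoneOn_sub ((hsol.u_mono i).monotoneOn _)
    (hsol.monotoneOn_sub_u hQ)

theorem lipschitzOnWith_sub_u (hsol : IsFluidSol np Q e f u) {i : Fin r} (hQ : 0 ≤ Q i i) :
    LipschitzOnWith 1 (fun t => t - u t i) (Set.Ici 0) :=
  lipschitzOnWith_one_of_monotoneOn_of_monotoneOn_sub (hsol.monotoneOn_sub_u hQ) <| by
    simpa only [sub_sub_cancel] using (hsol.u_mono i).monotoneOn _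

theorem exists_lipschitzOnWith_f (hsol : IsFluidSol np Q e f u) {i : Fin r} (hQ : 0 ≤ Q i i)
    (j : Fin r) : ∃ K, LipschitzOnWith K (fun t => f t i j) (Set.Ici 0) :=
  ⟨_, ((((LipschitzWith.const (f 0 i j)).lipschitzOnWith).add
    ((hsol.lipschitzOnWith_sub_u hQ).const_mul _)).sub
      ((hsol.lipschitzOnWith_integral_f i j).const_mul _)).congr fun t ht => hsol.eq_f i j t ht⟩

theorem exists_lipschitzOnWith_e (hsol : IsFluidSol np Q e f u) {i : Fin r} (hQ : 0 ≤ Q i i)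
    (j : Fin r) : ∃ K, LipschitzOnWith K (fun t => e t i j) (Set.Ici 0) := by
  have hinflow : LipschitzOnWith _ (fun t => ∑ k, np.mu k i * ∫ s in (0:ℝ)..t, f s k i)
      (Set.Ici 0) :=
    LipschitzOnWith.sum fun k _ => (hsol.lipschitzOnWith_integral_f k i).const_mul _
  by_cases hij : i = j
  · subst hij
    exact ⟨_, (((((LipschitzWith.const (e 0 i i)).lipschitzOnWith).sub
      ((hsol.lipschitzOnWith_sub_u hQ).const_mul _)).add
      (LipschitzOnWith.sum fun k _ => (hsol.lipschitzOnWith_integral_e k i).const_mul _)).add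
      (hinflow.const_mul _)).congr fun t ht => hsol.eq_e_diag i t ht⟩
  · exact ⟨_, ((((LipschitzWith.const (e 0 i j)).lipschitzOnWith).sub
      ((hsol.lipschitzOnWith_integral_e i j).const_mul _)).add
      (hinflow.const_mul _)).congr fun t ht => hsol.eq_e_off i j hij t ht⟩

end IsFluidSol

theorem stmt_10_general {r : ℕ} (np : NetParams r)
    (Q : Mat r) (hQ : IsRouting Q)
    (e f : ℝ → Mat r) (u : ℝ → Fin r → ℝ)
    (hsol : IsFluidSol np Q e f u) :
    (∀ i, ∀ s t : ℝ, 0 ≤ s → 0 ≤ t → |u t i - u s i| ≤ |t - s|) ∧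
    ∃ L : ℝ, 0 < L ∧ ∀ i j, ∀ s t : ℝ, 0 ≤ s → 0 ≤ t →
      |e t i j - e s i j| ≤ L * |t - s| ∧ |f t i j - f s i j| ≤ L * |t - s| := by
  have hQii : ∀ i, 0 ≤ Q i i := fun i => hQ.1 i i
  refine ⟨fun i s t hs ht => by
    simpa only [NNReal.coe_one, one_mul] using (hsol.lipschitzOnWith_u (hQii i)).abs_sub_le ht hs,
    ?_⟩
  obtain ⟨Ke, hKe⟩ := LipschitzOnWith.exists_forall_of_finite fun p : Fin r × Fin r =>
    hsol.exists_lipschitzOnWith_e (hQii p.1) p.2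
  obtain ⟨Kf, hKf⟩ := LipschitzOnWith.exists_forall_of_finite fun p : Fin r × Fin r =>
    hsol.exists_lipschitzOnWith_f (hQii p.1) p.2
  refine ⟨(max Ke Kf + 1 : ℝ≥0), by positivity, fun i j s t hs ht => ⟨?_, ?_⟩⟩
  · exact ((hKe (i, j)).weaken (le_add_right (le_max_left Ke Kf))).abs_sub_le ht hs
  · exact ((hKf (i, j)).weaken (le_add_right (le_max_right Ke Kf))).abs_sub_le ht hs

/-- Each `u_i` is 1-Lipschitz on `[0,∞)`, and `e` and `f` are Lipschitz
continuous on `[0,∞)`. -/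
theorem stmt_10 {r : ℕ} (hr : 1 ≤ r) (np : NetParams r)
    (Q : Mat r) (hQ : IsRouting Q)
    (e f : ℝ → Mat r) (u : ℝ → Fin r → ℝ)
    (hsol : IsFluidSol np Q e f u) :
    (∀ i, ∀ s t : ℝ, 0 ≤ s → 0 ≤ t → |u t i - u s i| ≤ |t - s|) ∧
    ∃ L : ℝ, 0 < L ∧ ∀ i j, ∀ s t : ℝ, 0 ≤ s → 0 ≤ t →
      |e t i j - e s i j| ≤ L * |t - s| ∧ |f t i j - f s i j| ≤ L * |t - s| :=
  stmt_10_general np Q hQ e f u hsol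
end

section
/- Let u : [0,∞) → ℝ be non-decreasing with u(0) = 0, and let g : [0,∞) → [0,∞) be continuous with ∫_{[0,∞)} g(s) du(s) = 0, where the integral is the Lebesgue–Stieltjes integral with respect to u. Then at every point t ≥ 0 at which u is differentiable, g(t) · u′(t) = 0. -/
/-!
If `g t > 0`, continuity gives an interval `(t, b)` on which `g > 0`. Since `∫ g du = 0`, the
Stieltjes measure of every `(t, x]` with `x < b` vanishes, so `u` (continuous at `t`) is constant
on `[t, b)`. Hence the right difference quotients of `u` at `t` vanish and `u' t = 0`.
-/

open Filter Topology MeasureTheory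

open Set

theorem measure_eq_zero_of_setLIntegral_eq_zero {α : Type*} [MeasurableSpace α] {μ : Measure α}
    {f : α → ENNReal} {s A : Set α} (hf : AEMeasurable f (μ.restrict s))
    (h : ∫⁻ x in s, f x ∂μ = 0) (hAs : A ⊆ s) (hA : ∀ x ∈ A, f x ≠ 0) : μ A = 0 := by
  have hae : μ.restrict s {x | f x ≠ 0} = 0 := ae_iff.1 ((lintegral_eq_zero_iff' hf).1 h)
  rw [← Measure.restrict_eq_self μ hAs]
  exact measure_mono_null hA hae

theorem Monotone.eq_of_stieltjesFunction_measure_Ioc_eq_zero {f : ℝ → ℝ} (hf : Monotone f)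
    {a b : ℝ} (ha : ContinuousWithinAt f (Ici a) a) (hab : a ≤ b)
    (h : hf.stieltjesFunction.measure (Ioc a b) = 0) : f b = f a := by
  rw [StieltjesFunction.measure_Ioc, hf.stieltjesFunction_eq, hf.stieltjesFunction_eq,
    ha.rightLim_eq, ENNReal.ofReal_eq_zero, sub_nonpos] at h
  exact le_antisymm ((hf.le_rightLim le_rfl).trans h) (hf hab)

theorem HasDerivAt.eq_zero_of_eventuallyEq_nhdsGT {f : ℝ → ℝ} {d t : ℝ} (hd : HasDerivAt f d t)
    (h : f =ᶠ[𝓝[>] t] fun _ => f t) : d = 0 :=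
  (uniqueDiffWithinAt_Ioi t).eq_deriv _ hd.hasDerivWithinAt
    ((hasDerivWithinAt_const t _ (f t)).congr_of_eventuallyEq h rfl)

theorem lsMeasure_of_monotone {u : ℝ → ℝ} (hu : Monotone u) :
    lsMeasure u = hu.stieltjesFunction.measure := by
  simp [lsMeasure, hu]

theorem stmt_11_general (u g : ℝ → ℝ)
    (hu_mono : Monotone u)
    (hg_cont : ContinuousOn g (Set.Ici 0))
    (hg_nonneg : ∀ t : ℝ, 0 ≤ t → 0 ≤ g t)
    (hint : ∫⁻ s in Set.Ici (0:ℝ), ENNReal.ofReal (g s) ∂(lsMeasure u) = 0) :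
    ∀ t : ℝ, 0 ≤ t → ∀ d : ℝ, HasDerivAt u d t → g t * d = 0 := by
  intro t ht d hd
  rcases (hg_nonneg t ht).eq_or_lt with hgt | hgt
  · simp [← hgt]
  have hg_pos : ∀ᶠ x in 𝓝[>] t, 0 < g x :=
    ((hg_cont t ht).mono_left (nhdsWithin_mono _ fun x hx => ht.trans (le_of_lt hx))).eventually
      (eventually_gt_nhds hgt)
  obtain ⟨b, hb, hIoo⟩ := mem_nhdsGT_iff_exists_Ioo_subset.1 hg_pos
  have hμ : ∀ x ∈ Ioo t b, lsMeasure u (Ioc t x) = 0 := fun x hx =>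
    measure_eq_zero_of_setLIntegral_eq_zero
      (ENNReal.measurable_ofReal.comp_aemeasurable (hg_cont.aemeasurable measurableSet_Ici))
      hint (fun y hy => ht.trans hy.1.le)
      fun y hy => (ENNReal.ofReal_pos.2 (hIoo ⟨hy.1, hy.2.trans_lt hx.2⟩)).ne'
  have hu_const : ∀ x ∈ Ioo t b, u x = u t := fun x hx =>
    hu_mono.eq_of_stieltjesFunction_measure_Ioc_eq_zero hd.continuousAt.continuousWithinAt
      hx.1.le (lsMeasure_of_monotone hu_mono ▸ hμ x hx)
  have hd_zero : d = 0 :=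
    hd.eq_zero_of_eventuallyEq_nhdsGT (mem_of_superset (Ioo_mem_nhdsGT hb) hu_const)
  simp [hd_zero]

/-- If `u : [0,∞) → ℝ` is non-decreasing with `u 0 = 0` (extended by `0` to the
negative reals), `g : [0,∞) → [0,∞)` is continuous, and the Lebesgue–Stieltjes
integral `∫_{[0,∞)} g du = 0`, then `g t * u' t = 0` at every `t ≥ 0` where `u`
is differentiable. -/
theorem stmt_11 (u g : ℝ → ℝ)
    (hu_mono : Monotone u) (hu_zero : ∀ t : ℝ, t ≤ 0 → u t = 0)
    (hg_cont : ContinuousOn g (Set.Ici 0))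
    (hg_nonneg : ∀ t : ℝ, 0 ≤ t → 0 ≤ g t)
    (hint : ∫⁻ s in Set.Ici (0:ℝ), ENNReal.ofReal (g s) ∂(lsMeasure u) = 0) :
    ∀ t : ℝ, 0 ≤ t → ∀ d : ℝ, HasDerivAt u d t → g t * d = 0 :=
  stmt_11_general u g hu_mono hg_cont hg_nonneg hint
end

section
/- Let Q be a routing matrix, let (e, f, u) be a fluid model solution, and let t > 0 be a point at which u_i, e_{ii}, and all e_{ji}, f_{ji} are differentiable. If u_i′(t) > 0, then e_{ii}(t) = 0, e_{ii}′(t) = 0, and consequently λ_i (1 − u_i′(t)) = Σ_{j ≠ i} μ_{ji} e_{ji}(t) + Q_{ii} Σ_{j=1}^r μ_{ji} f_{ji}(t). -/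
open Finset Filter Topology MeasureTheory intervalIntegral

/-!
Where `u_i` grows at a positive rate, its Stieltjes measure charges every neighbourhood of `t`;
the complementarity condition `∫ e_ii du_i = 0` then forces the continuous, nonnegative
`e_ii` to vanish at `t`. So `t` is a minimum of `e_ii`, hence `e_ii'(t) = 0`, and differentiating
the balance equation for `e_ii` at `t` gives the identity for `λ_i (1 - u_i'(t))`.
-/

theorem Monotone.mem_support_stieltjesFunction_measure {g : ℝ → ℝ} (hg : Monotone g)
    {d t : ℝ} (hd : HasDerivAt g d t) (hpos : 0 < d) :
    t ∈ hg.stieltjesFunction.measure.support := by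
  rw [Measure.mem_support_iff_forall]
  intro U hU
  obtain ⟨a, b, ⟨hat, htb⟩, hab⟩ := mem_nhds_iff_exists_Ioo_subset.1 hU
  have hslope : ∀ᶠ s in 𝓝[>] t, 0 < slope g t s :=
    (hasDerivAt_iff_tendsto_slope_left_right.1 hd).2.eventually (eventually_gt_nhds hpos)
  obtain ⟨s, hs_slope, hts, hsb⟩ := (hslope.and (Ioo_mem_nhdsGT htb)).exists
  have hgs : g t < g s := by
    rw [slope_def_field] at hs_slope
    exact sub_pos.1 ((div_pos_iff_of_pos_right (sub_pos.2 hts)).1 hs_slope)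
  calc (0 : ENNReal) < hg.stieltjesFunction.measure (Set.Ioc a s) := by
        rw [StieltjesFunction.measure_Ioc, ENNReal.ofReal_pos, sub_pos,
          hg.stieltjesFunction_eq, hg.stieltjesFunction_eq]
        exact (hg.rightLim_le hat).trans_lt (hgs.trans_le (hg.le_rightLim le_rfl))
    _ ≤ hg.stieltjesFunction.measure U :=
        measure_mono ((Set.Ioc_subset_Ioo_right hsb).trans hab)

theorem setLIntegral_pos_of_mem_support {X : Type*} [TopologicalSpace X] [MeasurableSpace X]
    [OpensMeasurableSpace X] {μ : Measure X} {h : X → ℝ} {x : X} (hx : x ∈ μ.support)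
    (hc : ContinuousAt h x) (hpos : 0 < h x) {S : Set X} (hS : S ∈ 𝓝 x) :
    0 < ∫⁻ y in S, ENNReal.ofReal (h y) ∂μ := by
  have hV : S ∩ {y | h x / 2 < h y} ∈ 𝓝 x :=
    inter_mem hS (hc.eventually (eventually_gt_nhds (half_lt_self hpos)))
  obtain ⟨V, hVsub, hVopen, hxV⟩ := mem_nhds_iff.1 hV
  calc (0 : ENNReal) < ENNReal.ofReal (h x / 2) * μ V :=
        ENNReal.mul_pos (ENNReal.ofReal_pos.2 (half_pos hpos)).ne'
          ((Measure.mem_support_iff_forall x).1 hx V (hVopen.mem_nhds hxV)).ne'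
    _ = ∫⁻ _ in V, ENNReal.ofReal (h x / 2) ∂μ := (setLIntegral_const V _).symm
    _ ≤ ∫⁻ y in V, ENNReal.ofReal (h y) ∂μ :=
        setLIntegral_mono' hVopen.measurableSet fun y hy =>
          ENNReal.ofReal_le_ofReal (hVsub hy).2.le
    _ ≤ ∫⁻ y in S, ENNReal.ofReal (h y) ∂μ :=
        lintegral_mono_set fun y hy => (hVsub hy).1

theorem hasDerivAt_integral_of_continuousOn_Ici {g : ℝ → ℝ} {a t : ℝ}
    (hg : ContinuousOn g (Set.Ici a)) (ht : a < t) :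
    HasDerivAt (fun s => ∫ x in a..s, g x) (g t) t :=
  integral_hasDerivAt_right
    ((hg.mono (Set.uIcc_of_le ht.le ▸ Set.Icc_subset_Ici_self)).intervalIntegrable)
    ((hg.mono Set.Ioi_subset_Ici_self).stronglyMeasurableAtFilter isOpen_Ioi t ht)
    (hg.continuousAt (Ici_mem_nhds ht))

namespace IsFluidSol

variable {r : ℕ} {np : NetParams r} {Q : Mat r} {e f : ℝ → Mat r} {u : ℝ → Fin r → ℝ}
  {i : Fin r} {t du : ℝ}

theorem diag_eq_zero_of_hasDerivAt (hsol : IsFluidSol np Q e f u) (ht : 0 < t)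
    (hdu : HasDerivAt (fun s => u s i) du t) (hdu_pos : 0 < du) : e t i i = 0 := by
  by_contra hne
  have hpos : 0 < e t i i := lt_of_le_of_ne ((hsol.mem_T t ht.le).1 i i).1 (Ne.symm hne)
  have hm := hsol.u_mono i
  have hint := setLIntegral_pos_of_mem_support
    (hm.mem_support_stieltjesFunction_measure hdu hdu_pos)
    ((hsol.cont_e i i).continuousAt (Ici_mem_nhds ht)) hpos (Ici_mem_nhds ht)
  have hcompl := hsol.compl i
  rw [lsMeasure, dif_pos hm] at hcompl
  exact hint.ne' hcompl

theorem hasDerivAt_diag (hsol : IsFluidSol np Q e f u) (ht : 0 < t)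
    (hdu : HasDerivAt (fun s => u s i) du t) :
    HasDerivAt (fun s => e s i i)
      (-(np.lam i * (1 - du))
        + (∑ j ∈ Finset.univ.filter (fun j => j ≠ i), np.mu j i * e t j i)
        + Q i i * ∑ j, np.mu j i * f t j i) t := by
  have hbalance : HasDerivAt (fun s => e 0 i i - np.lam i * (s - u s i)
      + (∑ j ∈ Finset.univ.filter (fun j => j ≠ i), np.mu j i * ∫ x in (0:ℝ)..s, e x j i)
      + Q i i * ∑ j, np.mu j i * ∫ x in (0:ℝ)..s, f x j i)
      (-(np.lam i * (1 - du))
        + (∑ j ∈ Finset.univ.filter (fun j => j ≠ i), np.mu j i * e t j i)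
        + Q i i * ∑ j, np.mu j i * f t j i) t := by
    have hidle : HasDerivAt (fun s => e 0 i i - np.lam i * (s - u s i))
        (-(np.lam i * (1 - du))) t := by
      simpa using (((hasDerivAt_id t).sub hdu).const_mul (np.lam i)).const_sub (e 0 i i)
    refine (hidle.add (HasDerivAt.fun_sum fun j _ => ?_)).add
      ((HasDerivAt.fun_sum fun j _ => ?_).const_mul (Q i i))
    · exact (hasDerivAt_integral_of_continuousOn_Ici (hsol.cont_e j i) ht).const_mul _
    · exact (hasDerivAt_integral_of_continuousOn_Ici (hsol.cont_f j i) ht).const_mul _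
  refine hbalance.congr_of_eventuallyEq ?_
  filter_upwards [Ici_mem_nhds ht] with s hs
  exact hsol.eq_e_diag i s hs

end IsFluidSol

theorem stmt_12_general {r : ℕ} (np : NetParams r)
    (Q : Mat r)
    (e f : ℝ → Mat r) (u : ℝ → Fin r → ℝ)
    (hsol : IsFluidSol np Q e f u)
    (i : Fin r) (t : ℝ) (ht : 0 < t)
    (du : ℝ) (hdu : HasDerivAt (fun s => u s i) du t)
    (de : ℝ) (hde : HasDerivAt (fun s => e s i i) de t)
    (hdu_pos : 0 < du) :
    e t i i = 0 ∧ de = 0 ∧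
      np.lam i * (1 - du) =
        (∑ j ∈ Finset.univ.filter (fun j => j ≠ i), np.mu j i * e t j i)
          + Q i i * ∑ j, np.mu j i * f t j i := by
  have hzero : e t i i = 0 := hsol.diag_eq_zero_of_hasDerivAt ht hdu hdu_pos
  have hmin : IsLocalMin (fun s => e s i i) t := by
    filter_upwards [Ici_mem_nhds ht] with s hs
    simpa [hzero] using ((hsol.mem_T s hs).1 i i).1
  have hde_zero : de = 0 := hmin.hasDerivAt_eq_zero hde
  have hde_eq := hde.unique (hsol.hasDerivAt_diag ht hdu)
  exact ⟨hzero, hde_zero, by linarith⟩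

/-- At a regular point `t > 0` with `u_i'(t) > 0`, one has `e_{ii}(t) = 0`,
`e_{ii}'(t) = 0`, and `λ_i (1 − u_i'(t)) = Σ_{j≠i} μ_{ji} e_{ji}(t) + Q_{ii} Σ_j μ_{ji} f_{ji}(t)`. -/
theorem stmt_12 {r : ℕ} (hr : 1 ≤ r) (np : NetParams r)
    (Q : Mat r) (hQ : IsRouting Q)
    (e f : ℝ → Mat r) (u : ℝ → Fin r → ℝ)
    (hsol : IsFluidSol np Q e f u)
    (i : Fin r) (t : ℝ) (ht : 0 < t)
    (du : ℝ) (hdu : HasDerivAt (fun s => u s i) du t)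
    (de : ℝ) (hde : HasDerivAt (fun s => e s i i) de t)
    (hdiff_e : ∀ j, DifferentiableAt ℝ (fun s => e s j i) t)
    (hdiff_f : ∀ j, DifferentiableAt ℝ (fun s => f s j i) t)
    (hdu_pos : 0 < du) :
    e t i i = 0 ∧ de = 0 ∧
      np.lam i * (1 - du) =
        (∑ j ∈ Finset.univ.filter (fun j => j ≠ i), np.mu j i * e t j i)
          + Q i i * ∑ j, np.mu j i * f t j i :=
  stmt_12_general np Q e f u hsol i t ht du hdu de hde hdu_pos
end
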